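/- arXiv:1908.08491 — 9 statements merged into one kernel-verified Lean document; each statement's English description precedes it below -/
import Mathlib

section
/- Let l ≥ 1 and let M₁(λ) be the l×l matrix with diagonal entries M₁(λ)_{j,j} = λ - (j-1)(l-j+1) for j = 1,…,l, superdiagonal entries M₁(λ)_{j,j+1} = -jλ, subdiagonal entries M₁(λ)_{j+1,j} = l-j, and all other entries zero. Then det M₁(λ) = λ^l. -/
/-!
M₁(λ) factors as `L * U`, where `L` is lower bidiagonal with diagonal `λ` and subdiagonal
`l - j` and `U` is unit upper bidiagonal with superdiagonal `-j`: the diagonal entry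
`λ - (j-1)(l-j+1)` of M₁(λ) is `λ + (l-j+1)·(-(j-1))`. Hence `det M₁(λ) = det L · det U = λ^l`.
No division by `λ` occurs, so the identity holds over any commutative ring.
-/

namespace Matrix

variable {R : Type*} [CommRing R] {n : ℕ}

def lowerBidiagonal (d a : ℕ → R) : Matrix (Fin n) (Fin n) R :=
  of fun i j => if (i : ℕ) = j then d i else if (j : ℕ) + 1 = i then a i else 0

def upperUnitBidiagonal (e : ℕ → R) : Matrix (Fin n) (Fin n) R :=
  of fun i j => if (i : ℕ) = j then 1 else if (i : ℕ) + 1 = j then e j else 0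

theorem det_lowerBidiagonal (d a : ℕ → R) :
    (lowerBidiagonal d a : Matrix (Fin n) (Fin n) R).det = ∏ i : Fin n, d i := by
  rw [det_of_isLowerTriangular]
  · simp [lowerBidiagonal]
  · intro i j hij
    have : (i : ℕ) < j := hij
    simp only [lowerBidiagonal, of_apply]
    rw [if_neg (by omega), if_neg (by omega)]

theorem det_upperUnitBidiagonal (e : ℕ → R) :
    (upperUnitBidiagonal e : Matrix (Fin n) (Fin n) R).det = 1 := by
  rw [det_of_isUpperTriangular]
  · simp [upperUnitBidiagonal]
  · intro i j hij
    have : (j : ℕ) < i := hij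
    simp only [upperUnitBidiagonal, of_apply]
    rw [if_neg (by omega), if_neg (by omega)]

/-- The superdiagonal of `upperUnitBidiagonal e` is indexed by column, so `e 0` is never an entry;
requiring it to vanish makes the diagonal of the product uniform. -/
theorem lowerBidiagonal_mul_upperUnitBidiagonal (d a e : ℕ → R) (he : e 0 = 0) :
    (lowerBidiagonal d a * upperUnitBidiagonal e : Matrix (Fin n) (Fin n) R) =
      of fun i j : Fin n => if (i : ℕ) = j then d i + a i * e i
        else if (i : ℕ) + 1 = j then d i * e j
        else if (j : ℕ) + 1 = i then a i else 0 := by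
  ext ⟨i, hi⟩ ⟨j, hj⟩
  simp only [mul_apply, lowerBidiagonal, upperUnitBidiagonal, of_apply]
  set U : ℕ → R := fun k => if k = j then 1 else if k + 1 = j then e j else 0
  have hsplit : ∀ k, (if i = k then d i else if k + 1 = i then a i else 0) * U k =
      (if i = k then d i * U i else 0) + (if k + 1 = i then a i * U k else 0) := by
    intro k
    split_ifs <;> first | omega | (subst_vars; ring)
  rw [Fin.sum_univ_eq_sum_range (fun k => (if i = k then d i else if k + 1 = i then a i else 0) * U k),
    Finset.sum_congr rfl fun k _ => hsplit k, Finset.sum_add_distrib, Finset.sum_ite_eq,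
    if_pos (Finset.mem_range.2 hi)]
  rcases i with _ | i
  · simp only [U]
    split_ifs <;> first | omega | simp_all
  · simp only [Nat.add_right_cancel_iff, Finset.sum_ite_eq', Finset.mem_range.2 (by omega : i < n),
      if_true, U]
    split_ifs <;> first | omega | (subst_vars; simp_all)

end Matrix

open Matrix in
theorem stmt0_general (l : ℕ) (lam : ℂ) :
    (Matrix.of fun i j : Fin l =>
      if (i : ℕ) = (j : ℕ) then lam - (((i : ℕ) * (l - (i : ℕ)) : ℕ) : ℂ)
      else if (i : ℕ) + 1 = (j : ℕ) then -((((i : ℕ) + 1 : ℕ)) : ℂ) * lam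
      else if (j : ℕ) + 1 = (i : ℕ) then (((l - (i : ℕ) : ℕ)) : ℂ)
      else 0).det = lam ^ l := by
  trans (lowerBidiagonal (fun _ => lam) (fun i => ((l - i : ℕ) : ℂ)) *
    upperUnitBidiagonal (fun j => -(j : ℂ)) : Matrix (Fin l) (Fin l) ℂ).det
  · rw [lowerBidiagonal_mul_upperUnitBidiagonal _ _ _ (by simp)]
    congr 2
    funext i j
    split_ifs with hdiag hsuper
    · push_cast
      ring
    · rw [← hsuper]
      push_cast
      ring
    all_goals rfl
  · rw [det_mul, det_lowerBidiagonal, det_upperUnitBidiagonal, Finset.prod_const, Finset.card_fin,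
      mul_one]

/-- det of the tridiagonal matrix M₁(λ) equals λ^l. -/
theorem stmt0 (l : ℕ) (hl : 1 ≤ l) (lam : ℂ) :
    (Matrix.of fun i j : Fin l =>
      if (i : ℕ) = (j : ℕ) then lam - (((i : ℕ) * (l - (i : ℕ)) : ℕ) : ℂ)
      else if (i : ℕ) + 1 = (j : ℕ) then -((((i : ℕ) + 1 : ℕ)) : ℂ) * lam
      else if (j : ℕ) + 1 = (i : ℕ) then (((l - (i : ℕ) : ℕ)) : ℂ)
      else 0).det = lam ^ l :=
  stmt0_general l lam
end

section
/- Let l ≥ 2 and let T(λ,μ) be the l×l tridiagonal matrix with all diagonal entries equal to λ, superdiagonal entries T_{j,j+1} = jμ for j = 1,…,l-1, and subdiagonal entries T_{j+1,j} = (l-j)μ. Then det T(λ,μ) = (λ-(l-1)μ)(λ-(l-3)μ)⋯(λ+(l-1)μ) = ∏_{k=0}^{l-1}(λ - (l-1-2k)μ). -/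
/-!
In the basis `x ^ j * y ^ (l - 1 - j)` the matrix `T(λ, μ)` is `λ + μ S` with `S = y ∂ₓ + x ∂_y`
acting on homogeneous polynomials of degree `n = l - 1`. In the coordinates `u = x + y`,
`v = x - y` we have `S u = u` and `S v = -v`, so `u ^ k * v ^ (n - k)` is an eigenvector of `S`
with eigenvalue `2k - n`. These `n + 1` eigenvalues are distinct, hence the eigenvectors form a
basis and `det T(λ, μ) = ∏ₖ (λ + (2k - n) μ)`. Setting `y = 1`, everything is computed on
coefficient vectors of one-variable polynomials, where `S` becomes
`f ↦ (1 - X²) f' + n X f` and the eigenvectors are `(1 + X) ^ k * (1 - X) ^ (n - k)`.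
-/

open Polynomial Matrix

theorem Matrix.det_eq_prod_of_mulVec_eq_smul {ι K : Type*} [Fintype ι] [DecidableEq ι] [Field K]
    (A : Matrix ι ι K) (v : ι → ι → K) (d : ι → K) (hv : LinearIndependent K v)
    (hAv : ∀ k, A *ᵥ v k = d k • v k) : A.det = ∏ k, d k := by
  set P : Matrix ι ι K := (Matrix.of v)ᵀ
  have hP : IsUnit P.det := by
    rwa [← isUnit_iff_isUnit_det, ← linearIndependent_cols_iff_isUnit]
  have hAP : A * P = P * diagonal d := by
    ext i k
    rw [mul_diagonal]
    simpa [Matrix.mul_apply, mulVec, dotProduct, P, mul_comm] using congrFun (hAv k) i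
  have hdet := congrArg det hAP
  rw [det_mul, det_mul, det_diagonal, mul_comm] at hdet
  exact hP.mul_left_cancel hdet

theorem Polynomial.mul_derivative_pow {R : Type*} [CommSemiring R] (p : R[X]) (n : ℕ) :
    p * derivative (p ^ n) = C (n : R) * p ^ n * derivative p := by
  rcases n with _ | n
  · simp
  · rw [derivative_pow_succ, pow_succ]
    push_cast
    ring

section SOperator

variable {R : Type*} [CommRing R]

def sMatrix (l : ℕ) : Matrix (Fin l) (Fin l) R :=
  Matrix.of fun i j =>
    if (i : ℕ) + 1 = (j : ℕ) then (((i : ℕ) + 1 : ℕ) : R)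
    else if (j : ℕ) + 1 = (i : ℕ) then ((l - (i : ℕ) : ℕ) : R)
    else 0

noncomputable def sOperator (n : ℕ) (f : R[X]) : R[X] :=
  (1 - X ^ 2) * derivative f + C (n : R) * X * f

def coeffVec (l : ℕ) (f : R[X]) : Fin l → R := fun i => f.coeff i

theorem coeffVec_C_mul (l : ℕ) (c : R) (f : R[X]) :
    coeffVec l (C c * f) = c • coeffVec l f := by
  ext i
  simp [coeffVec, coeff_C_mul]

theorem sOperator_coeff_zero (n : ℕ) (f : R[X]) : (sOperator n f).coeff 0 = f.coeff 1 := by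
  simp [sOperator, coeff_derivative, sub_mul, pow_two, mul_assoc]

theorem sOperator_coeff_succ (n j : ℕ) (f : R[X]) :
    (sOperator n f).coeff (j + 1)
      = ((j : R) + 2) * f.coeff (j + 2) + ((n : R) - j) * f.coeff j := by
  rcases j with _ | j <;>
  · simp [sOperator, coeff_derivative, sub_mul, pow_two, mul_assoc, coeff_X_mul]
    ring

theorem sMatrix_mulVec_coeffVec (n : ℕ) (f : R[X]) (hf : f.natDegree ≤ n) :
    sMatrix (n + 1) *ᵥ coeffVec (n + 1) f = coeffVec (n + 1) (sOperator n f) := by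
  ext ⟨j, hj⟩
  have hc : f.coeff (n + 1) = 0 := coeff_eq_zero_of_natDegree_lt (by omega)
  simp only [mulVec, dotProduct, sMatrix, coeffVec, of_apply]
  rw [Fin.sum_univ_eq_sum_range (fun m => (if j + 1 = m then ((j + 1 : ℕ) : R)
    else if m + 1 = j then ((n + 1 - j : ℕ) : R) else 0) * f.coeff m)]
  rcases j with _ | j
  · simp [sOperator_coeff_zero, Finset.sum_ite_eq]
    rintro rfl
    exact hc.symm
  · have hjn : j ≤ n := by omega
    have split : ∀ m, (if j + 1 + 1 = m then ((j + 1 + 1 : ℕ) : R)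
        else if m + 1 = j + 1 then ((n + 1 - (j + 1) : ℕ) : R) else 0) * f.coeff m
        = (if m = j + 2 then ((j : R) + 2) * f.coeff m else 0)
          + (if m = j then ((n : R) - j) * f.coeff m else 0) := by
      intro m
      split_ifs <;>
        first | omega | (subst_vars; push_cast [Nat.add_sub_add_right, Nat.cast_sub hjn]; ring)
    simp only [split, Finset.sum_add_distrib, Finset.sum_ite_eq', Finset.mem_range,
      sOperator_coeff_succ]
    rw [if_pos (by omega : j < n + 1)]
    by_cases hjn : j + 2 < n + 1
    · rw [if_pos hjn]
    · rw [if_neg hjn, show j + 2 = n + 1 by omega, hc, mul_zero]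

theorem sOperator_one_add_X_pow_mul_one_sub_X_pow (a b : ℕ) :
    sOperator (a + b) ((1 + X) ^ a * (1 - X) ^ b : R[X])
      = C ((a : R) - b) * ((1 + X) ^ a * (1 - X) ^ b) := by
  have ha := mul_derivative_pow (1 + X : R[X]) a
  have hb := mul_derivative_pow (1 - X : R[X]) b
  simp only [derivative_add, derivative_sub, derivative_one, derivative_X, zero_add, zero_sub,
    mul_neg, mul_one] at ha hb
  rw [sOperator, derivative_mul]
  simp only [Nat.cast_add, C_add, C_sub]
  linear_combination (1 - X) ^ b * (1 - X) * ha + (1 + X) ^ a * (1 + X) * hb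

noncomputable def sEigenvector (n : ℕ) (k : Fin (n + 1)) : Fin (n + 1) → R :=
  coeffVec (n + 1) ((1 + X) ^ (k : ℕ) * (1 - X) ^ (n - k))

theorem sMatrix_mulVec_sEigenvector (n : ℕ) (k : Fin (n + 1)) :
    sMatrix (n + 1) *ᵥ sEigenvector n k = (2 * (k : R) - n) • sEigenvector (R := R) n k := by
  have hk : (k : ℕ) ≤ n := Nat.lt_succ_iff.mp k.isLt
  have hdeg : ((1 + X) ^ (k : ℕ) * (1 - X) ^ (n - k) : R[X]).natDegree ≤ n := by
    calc _ ≤ (k : ℕ) + (n - k) := by compute_degree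
      _ = n := by omega
  have heigen := sOperator_one_add_X_pow_mul_one_sub_X_pow (R := R) k (n - k)
  rw [Nat.add_sub_cancel' hk, Nat.cast_sub hk] at heigen
  rw [sEigenvector, sMatrix_mulVec_coeffVec n _ hdeg, heigen, coeffVec_C_mul]
  ring_nf

theorem sEigenvector_ne_zero [Nontrivial R] (n : ℕ) (k : Fin (n + 1)) :
    sEigenvector (R := R) n k ≠ 0 := by
  intro h
  simpa [sEigenvector, coeffVec, coeff_zero_eq_eval_zero] using congrFun h 0

end SOperator

theorem det_smul_one_add_smul_sMatrix {K : Type*} [Field K] [CharZero K] (n : ℕ) (a b : K) :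
    (a • 1 + b • sMatrix (n + 1) : Matrix (Fin (n + 1)) (Fin (n + 1)) K).det
      = ∏ k : Fin (n + 1), (a + b * (2 * (k : K) - n)) := by
  have hinj : Function.Injective fun k : Fin (n + 1) => 2 * (k : K) - n := by
    intro i j hij
    simpa [Fin.ext_iff] using hij
  have hindep : LinearIndependent K (sEigenvector (R := K) n) :=
    Module.End.eigenvectors_linearIndependent' (toLin' (sMatrix (n + 1))) _ hinj _ fun k =>
      ⟨Module.End.mem_eigenspace_iff.mpr (by simpa using sMatrix_mulVec_sEigenvector n k),
        sEigenvector_ne_zero n k⟩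
  refine det_eq_prod_of_mulVec_eq_smul _ _ _ hindep fun k => ?_
  rw [add_mulVec, smul_mulVec, smul_mulVec, one_mulVec, sMatrix_mulVec_sEigenvector, smul_smul,
    add_smul]

theorem stmt2_general (l : ℕ) (lam mu : ℂ) :
    (Matrix.of fun i j : Fin l =>
      if (i : ℕ) = (j : ℕ) then lam
      else if (i : ℕ) + 1 = (j : ℕ) then (((i : ℕ) + 1 : ℕ) : ℂ) * mu
      else if (j : ℕ) + 1 = (i : ℕ) then (((l - (i : ℕ) : ℕ)) : ℂ) * mu
      else 0).det
    = ∏ k ∈ Finset.range l, (lam - ((l : ℂ) - 1 - 2 * (k : ℕ)) * mu) := by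
  rcases l with _ | n
  · simp
  calc _ = (lam • 1 + mu • sMatrix (n + 1) : Matrix (Fin (n + 1)) (Fin (n + 1)) ℂ).det := by
        congr 1
        ext i j
        simp only [of_apply, Matrix.add_apply, Matrix.smul_apply, one_apply, sMatrix, Fin.ext_iff,
          smul_eq_mul]
        split_ifs <;> first | omega | ring
    _ = _ := by
        rw [det_smul_one_add_smul_sMatrix,
          Fin.prod_univ_eq_prod_range (fun k => lam + mu * (2 * (k : ℂ) - n))]
        refine Finset.prod_congr rfl fun k _ => ?_
        push_cast
        ring

/-- determinant of the tridiagonal matrix T(λ,μ) with λ on the diagonal,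
jμ above and (l-j)μ below equals ∏_{k=0}^{l-1} (λ - (l-1-2k)μ). -/
theorem stmt2 (l : ℕ) (hl : 2 ≤ l) (lam mu : ℂ) :
    (Matrix.of fun i j : Fin l =>
      if (i : ℕ) = (j : ℕ) then lam
      else if (i : ℕ) + 1 = (j : ℕ) then (((i : ℕ) + 1 : ℕ) : ℂ) * mu
      else if (j : ℕ) + 1 = (i : ℕ) then (((l - (i : ℕ) : ℕ)) : ℂ) * mu
      else 0).det
    = ∏ k ∈ Finset.range l, (lam - ((l : ℂ) - 1 - 2 * (k : ℕ)) * mu) :=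
  stmt2_general l lam mu
end

section
/- Let l ≥ 1 and let H_l(μ) be the l×l matrix with entries H_{j,j} = (1-j)(l-j+1), H_{j,j+1} = μj, H_{j,j-1} = μ(l-j+1), and zero otherwise. Then det(H_l(μ) + λ·Id), viewed as a polynomial in λ and μ, is a polynomial in λ and μ² of total degree l in (λ, μ²). -/
/-!
Conjugating `H_l(μ)` by the diagonal sign matrix `diag((-1)^j)` negates exactly the
off-diagonal entries, i.e. replaces `μ` by `-μ`; so the determinant is even in `μ` and only
monomials with even `μ`-exponent occur, which is what it means to be a polynomial `P` in
`λ` and `μ²`. Halving the `μ`-exponents does not increase degrees, and every entry has degree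
at most one, so `deg P ≤ l`. At `μ = 0` the matrix is diagonal with entries `λ - j(l - j)`,
so `λ^l` occurs with coefficient `1` and `deg P = l`.
-/

open MvPolynomial Matrix

namespace MvPolynomial

section contractSq

variable {R σ : Type*} [CommSemiring R]

noncomputable def doubleExp (i : σ) : (σ →₀ ℕ) →+ (σ →₀ ℕ) :=
  .id _ + (Finsupp.singleAddHom i).comp (Finsupp.applyAddHom i)

lemma doubleExp_apply (i : σ) (m : σ →₀ ℕ) :
    doubleExp i m = m + Finsupp.single i (m i) := rfl

lemma doubleExp_injective (i : σ) : Function.Injective (doubleExp i) := by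
  intro m n h
  simp only [doubleExp_apply] at h
  have hi : m i = n i := by
    have := DFunLike.congr_fun h i
    simp only [Finsupp.add_apply, Finsupp.single_eq_same] at this
    omega
  rwa [hi, add_left_inj] at h

lemma mem_range_doubleExp {i : σ} {m : σ →₀ ℕ} (h : Even (m i)) :
    m ∈ Set.range (doubleExp i) := by
  classical
  obtain ⟨k, hk⟩ := h
  refine ⟨Finsupp.update m i k, Finsupp.ext fun j => ?_⟩
  rcases eq_or_ne j i with rfl | hj
  · simp [doubleExp_apply, hk]
  · simp [doubleExp_apply, Finsupp.update_apply, hj]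

lemma mapDomainAlgHom_monomial {τ : Type*} (f : (σ →₀ ℕ) →+ (τ →₀ ℕ)) (m : σ →₀ ℕ)
    (r : R) :
    AddMonoidAlgebra.mapDomainAlgHom R R f (monomial m r) = monomial (f m) r :=
  AddMonoidAlgebra.mapDomain_single

lemma aeval_update_X_sq [DecidableEq σ] (i : σ) :
    aeval (Function.update X i (X i ^ 2)) =
      AddMonoidAlgebra.mapDomainAlgHom R R (doubleExp i) := by
  refine algHom_ext fun j => ?_
  rw [aeval_X]
  conv_rhs => rw [X, mapDomainAlgHom_monomial, doubleExp_apply]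
  rcases eq_or_ne j i with rfl | hj
  · simp [X_pow_eq_monomial, ← Finsupp.single_add]
  · simp [hj, X]

/-- The polynomial `q` with `q(…, Xᵢ², …) = p` when `p` is even in `X i`. -/
noncomputable def contractSq (i : σ) (p : MvPolynomial σ R) : MvPolynomial σ R :=
  AddMonoidAlgebra.comapDomain (doubleExp i) (doubleExp_injective i) p

variable {i : σ} {p : MvPolynomial σ R}

lemma coeff_contractSq (m : σ →₀ ℕ) :
    coeff m (contractSq i p) = coeff (doubleExp i m) p := by
  simp [contractSq, coeff, AddMonoidAlgebra.coeff_comapDomain]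

lemma aeval_update_X_sq_contractSq [DecidableEq σ] (h : ∀ m ∈ p.support, Even (m i)) :
    aeval (Function.update X i (X i ^ 2)) (contractSq i p) = p := by
  rw [aeval_update_X_sq]
  exact AddMonoidAlgebra.mapDomain_comapDomain (fun m hm => mem_range_doubleExp (h m hm)) _

lemma totalDegree_contractSq_le : totalDegree (contractSq i p) ≤ totalDegree p := by
  refine Finset.sup_le fun m hm => ?_
  rw [mem_support_iff, coeff_contractSq] at hm
  refine le_trans ?_ (le_totalDegree (mem_support_iff.mpr hm))
  rw [doubleExp_apply, Finsupp.sum_add_index' (fun _ => rfl) (fun _ _ _ => rfl)]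
  exact Nat.le_add_right _ _

end contractSq

section negX

variable {R σ : Type*} [CommRing R] [DecidableEq σ]

lemma aeval_update_neg_X_monomial (i : σ) (n : σ →₀ ℕ) (c : R) :
    aeval (Function.update X i (-X i)) (monomial n c) = monomial n ((-1) ^ (n i) * c) := by
  have hf : Function.update (X : σ → MvPolynomial σ R) i (-X i) =
      fun j => (-1) ^ (if j = i then 1 else 0) * X j := by
    ext1 j
    rcases eq_or_ne j i with rfl | hj <;> simp [*]
  have hsign : (n.prod fun j k => ((-1 : MvPolynomial σ R) ^ (if j = i then 1 else 0)) ^ k) =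
      (-1) ^ (n i) := by
    simp only [← pow_mul, Finsupp.prod, Finset.prod_pow_eq_pow_sum, ite_mul, one_mul, zero_mul,
      Finset.sum_ite_eq', Finsupp.mem_support_iff]
    split_ifs with h <;> simp_all
  rw [aeval_monomial, hf, monomial_eq]
  simp only [mul_pow, Finsupp.prod_mul, hsign, algebraMap_eq, C_mul, map_pow, map_neg, C_1]
  ring

lemma coeff_aeval_update_neg_X (i : σ) (m : σ →₀ ℕ) (p : MvPolynomial σ R) :
    coeff m (aeval (Function.update X i (-X i)) p) = (-1) ^ (m i) * coeff m p := by
  induction p using induction_on' with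
  | monomial n c =>
    rw [aeval_update_neg_X_monomial, coeff_monomial, coeff_monomial]
    split_ifs with h
    · rw [h]
    · rw [mul_zero]
  | add p q hp hq => rw [map_add, coeff_add, coeff_add, hp, hq, mul_add]

lemma even_of_aeval_update_neg_X_eq_self [IsAddTorsionFree R] {i : σ} {p : MvPolynomial σ R}
    (h : aeval (Function.update X i (-X i)) p = p) {m : σ →₀ ℕ} (hm : m ∈ p.support) :
    Even (m i) := by
  by_contra hodd
  have hcoeff := coeff_aeval_update_neg_X i m p
  rw [h, (Nat.not_even_iff_odd.mp hodd).neg_one_pow, neg_one_mul, self_eq_neg] at hcoeff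
  exact mem_support_iff.mp hm hcoeff

end negX

lemma totalDegree_det_le {R σ n : Type*} [CommRing R] [Fintype n] [DecidableEq n]
    (A : Matrix n n (MvPolynomial σ R)) {d : ℕ} (h : ∀ i j, (A i j).totalDegree ≤ d) :
    A.det.totalDegree ≤ Fintype.card n * d := by
  rw [det_apply]
  refine (totalDegree_finsetSum _ _).trans (Finset.sup_le fun τ _ => ?_)
  refine (totalDegree_smul_le _ _).trans ((totalDegree_finsetProd _ _).trans ?_)
  simpa using Finset.sum_le_sum fun i (_ : i ∈ Finset.univ) => h (τ i) i

lemma coeff_single_zero_eq_coeff_map_constantCoeff {R : Type*} [CommSemiring R] {n : ℕ}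
    (p : MvPolynomial (Fin (n + 1)) R) (k : ℕ) :
    coeff (Finsupp.single 0 k) p = ((finSuccEquiv R n p).map constantCoeff).coeff k := by
  rw [Polynomial.coeff_map, constantCoeff_eq, finSuccEquiv_coeff_coeff,
    Finsupp.cons_zero_eq_single_zero]

end MvPolynomial

lemma Matrix.det_of_neg_one_pow_mul {R : Type*} [CommRing R] {n : ℕ}
    (A : Matrix (Fin n) (Fin n) R) :
    det (of fun i j : Fin n => (-1) ^ ((i : ℕ) + j) * A i j) = det A := by
  have h : (of fun i j : Fin n => (-1) ^ ((i : ℕ) + j) * A i j) =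
      of fun i j : Fin n =>
        (-1) ^ (j : ℕ) * (of fun i j : Fin n => (-1) ^ (i : ℕ) * A i j) i j := by
    ext i j
    simp only [of_apply, pow_add]
    ring
  rw [h, det_mul_row, det_mul_column, ← mul_assoc, ← Finset.prod_mul_distrib]
  simp [← mul_pow]

/-- `H_l(μ) + λ·Id`, with rows and columns indexed from `0`: the paper's row `j` is
row `j - 1` here. -/
noncomputable def hMatrix (l : ℕ) : Matrix (Fin l) (Fin l) (MvPolynomial (Fin 2) ℂ) :=
  Matrix.of fun i j : Fin l =>
    (if (i : ℕ) = (j : ℕ) then X 0 - C (((i : ℕ) * (l - (i : ℕ)) : ℕ) : ℂ)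
    else if (i : ℕ) + 1 = (j : ℕ) then X 1 * C ((((i : ℕ) + 1 : ℕ)) : ℂ)
    else if (j : ℕ) + 1 = (i : ℕ) then X 1 * C (((l - (i : ℕ) : ℕ)) : ℂ)
    else 0 : MvPolynomial (Fin 2) ℂ)

lemma mapMatrix_aeval_update_neg_X_hMatrix (l : ℕ) :
    (aeval (Function.update X 1 (-X 1))).mapMatrix (hMatrix l) =
      of fun i j : Fin l => (-1) ^ ((i : ℕ) + j) * hMatrix l i j := by
  ext i j
  simp only [hMatrix, AlgHom.mapMatrix_apply, map_apply, of_apply]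
  split_ifs with h₀ h₁ h₂
  · simp [h₀, ← two_mul]
  · simp [← h₁]
  · simp [← h₂]
  · simp

lemma aeval_update_neg_X_det_hMatrix (l : ℕ) :
    aeval (Function.update X 1 (-X 1)) (hMatrix l).det = (hMatrix l).det := by
  rw [AlgHom.map_det, mapMatrix_aeval_update_neg_X_hMatrix, det_of_neg_one_pow_mul]

lemma totalDegree_hMatrix_le (l : ℕ) (i j : Fin l) : (hMatrix l i j).totalDegree ≤ 1 := by
  simp only [hMatrix, of_apply]
  split_ifs
  · exact (totalDegree_sub_C_le _ _).trans (totalDegree_X _).le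
  · exact (totalDegree_mul _ _).trans (by rw [totalDegree_X, totalDegree_C])
  · exact (totalDegree_mul _ _).trans (by rw [totalDegree_X, totalDegree_C])
  · simp

lemma coeff_single_zero_det_hMatrix (l : ℕ) :
    coeff (Finsupp.single 0 l) (hMatrix l).det = 1 := by
  -- `ρ` sets `μ = 0` and reads the result as a polynomial in `λ`.
  let ρ := (Polynomial.mapRingHom constantCoeff).comp (finSuccEquiv ℂ 1).toRingHom
  have hX0 : ρ (X 0) = Polynomial.X := by simp [ρ, finSuccEquiv_X_zero]
  have hX1 : ρ (X 1) = 0 := by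
    change Polynomial.map constantCoeff (finSuccEquiv ℂ 1 (X (Fin.succ 0))) = 0
    rw [finSuccEquiv_X_succ, Polynomial.map_C, constantCoeff_X, map_zero]
  have hρ : ρ.mapMatrix (hMatrix l) =
      diagonal fun i : Fin l => Polynomial.X - Polynomial.C ((i * (l - i) : ℕ) : ℂ) := by
    ext i j
    simp only [hMatrix, RingHom.mapMatrix_apply, map_apply, of_apply, diagonal_apply,
      ← Fin.ext_iff]
    split_ifs <;> simp [hX0, hX1]
  have hmonic : (∏ i : Fin l, (Polynomial.X - Polynomial.C ((i * (l - i) : ℕ) : ℂ))).Monic :=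
    Polynomial.monic_prod_of_monic _ _ fun i _ => Polynomial.monic_X_sub_C _
  rw [coeff_single_zero_eq_coeff_map_constantCoeff]
  change (ρ _).coeff l = 1
  rw [RingHom.map_det, hρ, det_diagonal]
  have := hmonic.coeff_natDegree
  rwa [Polynomial.natDegree_finsetProd_X_sub_C_eq_card, Finset.card_univ, Fintype.card_fin] at this

/-- The variables are `X 0 = λ` and `X 1 = μ`. -/
theorem stmt3_general (l : ℕ) :
    ∃ P : MvPolynomial (Fin 2) ℂ, P.totalDegree = l ∧
      (Matrix.of fun i j : Fin l =>
        (if (i : ℕ) = (j : ℕ) then X 0 - C (((i : ℕ) * (l - (i : ℕ)) : ℕ) : ℂ)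
        else if (i : ℕ) + 1 = (j : ℕ) then X 1 * C ((((i : ℕ) + 1 : ℕ)) : ℂ)
        else if (j : ℕ) + 1 = (i : ℕ) then X 1 * C (((l - (i : ℕ) : ℕ)) : ℂ)
        else 0 : MvPolynomial (Fin 2) ℂ)).det
      = aeval ![X 0, (X 1) ^ 2] P := by
  change ∃ P, _ ∧ (hMatrix l).det = _
  have heven : ∀ m ∈ (hMatrix l).det.support, Even (m 1) := fun _ =>
    even_of_aeval_update_neg_X_eq_self (aeval_update_neg_X_det_hMatrix l)
  have hvars :
      ![X 0, X 1 ^ 2] = Function.update (X : Fin 2 → MvPolynomial (Fin 2) ℂ) 1 (X 1 ^ 2) := by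
    ext1 j
    fin_cases j <;> rfl
  have hlead : coeff (Finsupp.single 0 l) (contractSq 1 (hMatrix l).det) = 1 := by
    rw [coeff_contractSq, doubleExp_apply, Finsupp.single_eq_of_ne (by decide), Finsupp.single_zero,
      add_zero, coeff_single_zero_det_hMatrix]
  refine ⟨contractSq 1 (hMatrix l).det, le_antisymm ?_ ?_, ?_⟩
  · calc _ ≤ (hMatrix l).det.totalDegree := totalDegree_contractSq_le
      _ ≤ l := by simpa using totalDegree_det_le _ (totalDegree_hMatrix_le l)
  · have := le_totalDegree (mem_support_iff.mpr (hlead ▸ one_ne_zero))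
    rwa [Finsupp.sum_single_index rfl] at this
  · rw [hvars, aeval_update_X_sq_contractSq heven]

/-- det(H_l(μ) + λ·Id) is a polynomial in λ and μ² of total degree l
in (λ, μ²).  Here the variables are X 0 = λ and X 1 = μ in `MvPolynomial (Fin 2) ℂ`. -/
theorem stmt3 (l : ℕ) (hl : 1 ≤ l) :
    ∃ P : MvPolynomial (Fin 2) ℂ, P.totalDegree = l ∧
      (Matrix.of fun i j : Fin l =>
        (if (i : ℕ) = (j : ℕ) then X 0 - C (((i : ℕ) * (l - (i : ℕ)) : ℕ) : ℂ)
        else if (i : ℕ) + 1 = (j : ℕ) then X 1 * C ((((i : ℕ) + 1 : ℕ)) : ℂ)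
        else if (j : ℕ) + 1 = (i : ℕ) then X 1 * C (((l - (i : ℕ) : ℕ)) : ℂ)
        else 0 : MvPolynomial (Fin 2) ℂ)).det
      = aeval ![X 0, (X 1) ^ 2] P :=
  stmt3_general l
end

section
/- Let l ≥ 1 and Q(λ,R) = det(M₁(λ) + M₂(R)) as above. Then the only monomials of the form λ^k (pure powers of λ) appearing in Q with nonzero coefficient are λ^l (with coefficient 1); i.e., Q(λ,0) = λ^l. -/
/-!
At `R = 0` the tridiagonal matrix factors as `L * U`, where `L` is lower bidiagonal with
diagonal `λ` and subdiagonal `l - j`, and `U` is unit upper bidiagonal with superdiagonal `-j`: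
the diagonal entry `λ - (j - 1)(l - j + 1)` of the product is `λ + (l - j + 1) * (-(j - 1))`.
Hence `Q(λ, 0) = det L * det U = λ ^ l`.
-/

open MvPolynomial Matrix

theorem Fin.sum_ite_val_add_one_eq {M : Type*} [AddCommMonoid M] {n : ℕ} (i : Fin n)
    (f : Fin n → M) :
    (∑ k : Fin n, if (k : ℕ) + 1 = i then f k else 0) =
      if h : 0 < (i : ℕ) then f ⟨i - 1, by omega⟩ else 0 := by
  split_ifs with h
  · rw [Finset.sum_eq_single_of_mem ⟨i - 1, by omega⟩ (Finset.mem_univ _)]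
    · simp only [if_pos (by omega : (i : ℕ) - 1 + 1 = i)]
    · intro k _ hk
      rw [if_neg]
      exact fun h' => hk (Fin.ext (by simp; omega))
  · exact Finset.sum_eq_zero fun k _ => if_neg (by omega)

namespace Matrix

variable {R S : Type*} {n : ℕ}

/-- Both off-diagonal sequences are indexed by the row: `sup i` sits at `(i, i + 1)` and
`sub i` at `(i, i - 1)`. -/
def tridiagonal [Zero R] (n : ℕ) (d sup sub : ℕ → R) : Matrix (Fin n) (Fin n) R :=
  of fun i j => if (i : ℕ) = j then d i else if (i : ℕ) + 1 = j then sup i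
    else if (j : ℕ) + 1 = i then sub i else 0

theorem tridiagonal_map [Zero R] [Zero S] {F : Type*} [FunLike F R S] [ZeroHomClass F R S]
    (f : F) (d sup sub : ℕ → R) :
    (tridiagonal n d sup sub).map f = tridiagonal n (f ∘ d) (f ∘ sup) (f ∘ sub) := by
  ext i j
  simp only [tridiagonal, map_apply, of_apply, Function.comp_apply]
  split_ifs <;> simp

theorem det_tridiagonal_of_sup_eq_zero [CommRing R] (d sub : ℕ → R) :
    (tridiagonal n d 0 sub).det = ∏ i : Fin n, d i := by
  rw [det_of_isLowerTriangular]
  · simp [tridiagonal]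
  · intro i j (h : (i : ℕ) < j)
    simp only [tridiagonal, of_apply]
    split_ifs <;> first | omega | rfl

theorem det_tridiagonal_of_sub_eq_zero [CommRing R] (d sup : ℕ → R) :
    (tridiagonal n d sup 0).det = ∏ i : Fin n, d i := by
  rw [det_of_isUpperTriangular]
  · simp [tridiagonal]
  · intro i j (h : (j : ℕ) < i)
    simp only [tridiagonal, of_apply]
    split_ifs <;> first | omega | rfl

theorem sum_tridiagonal_of_sup_eq_zero_mul [Semiring R] (d sub : ℕ → R) (i : Fin n)
    (v : Fin n → R) :
    ∑ k, tridiagonal n d 0 sub i k * v k =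
      d i * v i + ∑ k : Fin n, if (k : ℕ) + 1 = i then sub i * v k else 0 := by
  calc ∑ k, tridiagonal n d 0 sub i k * v k
      = ∑ k, ((if i = k then d i * v k else 0) +
          if (k : ℕ) + 1 = i then sub i * v k else 0) := by
        refine Finset.sum_congr rfl fun k _ => ?_
        simp only [tridiagonal, of_apply, Fin.val_inj, Pi.zero_apply]
        split_ifs <;> first | omega | simp_all
    _ = _ := by rw [Finset.sum_add_distrib, Finset.sum_ite_eq, if_pos (Finset.mem_univ _)]

theorem tridiagonal_mul_tridiagonal [Semiring R] {d sub sup c : ℕ → R} (h0 : c 0 = d 0)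
    (hsucc : ∀ i, c (i + 1) = d (i + 1) + sub (i + 1) * sup i) :
    tridiagonal n d 0 sub * tridiagonal n 1 sup 0 = tridiagonal n c (d * sup) sub := by
  ext ⟨i, hi⟩ ⟨j, hj⟩
  rw [mul_apply, sum_tridiagonal_of_sup_eq_zero_mul, Fin.sum_ite_val_add_one_eq]
  simp only [tridiagonal, of_apply, Pi.mul_apply, Pi.one_apply, Pi.zero_apply]
  rcases i with _ | i <;> split_ifs <;> subst_vars <;> first | omega | simp_all

end Matrix

theorem stmt5_general (l : ℕ) :
    aeval ![(X 0 : MvPolynomial (Fin 2) ℂ), 0]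
      ((Matrix.of fun i j : Fin l =>
        (if (i : ℕ) = (j : ℕ) then X 0 - C (((i : ℕ) * (l - (i : ℕ)) : ℕ) : ℂ)
        else if (i : ℕ) + 1 = (j : ℕ) then
          -(C ((((i : ℕ) + 1 : ℕ)) : ℂ)) * X 0 + C ((((i : ℕ) + 1 : ℕ)) : ℂ) * X 1
        else if (j : ℕ) + 1 = (i : ℕ) then C (((l - (i : ℕ) : ℕ)) : ℂ)
        else 0 : MvPolynomial (Fin 2) ℂ)).det)
    = (X 0 : MvPolynomial (Fin 2) ℂ) ^ l := by
  let diag : ℕ → MvPolynomial (Fin 2) ℂ := fun i => X 0 - C ((i * (l - i) : ℕ) : ℂ)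
  let sub : ℕ → MvPolynomial (Fin 2) ℂ := fun i => C ((l - i : ℕ) : ℂ)
  let sup : ℕ → MvPolynomial (Fin 2) ℂ := fun i => -C ((i + 1 : ℕ) : ℂ)
  have hfactor : tridiagonal l diag ((fun _ => X 0) * sup) sub =
      tridiagonal l (fun _ => X 0) 0 sub * tridiagonal l 1 sup 0 := by
    refine (tridiagonal_mul_tridiagonal (by simp [diag]) fun i => ?_).symm
    simp only [diag, sub, sup, Nat.cast_mul, map_mul]
    ring
  have hspecialize : aeval ![(X 0 : MvPolynomial (Fin 2) ℂ), 0] ∘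
      (fun i : ℕ => -(C ((i + 1 : ℕ) : ℂ)) * X 0 + C ((i + 1 : ℕ) : ℂ) * X 1) =
      (fun _ => X 0) * sup :=
    funext fun i => by simp [sup, mul_comm]
  have hdiag : aeval ![(X 0 : MvPolynomial (Fin 2) ℂ), 0] ∘ diag = diag :=
    funext fun i => by simp [diag]
  have hsub : aeval ![(X 0 : MvPolynomial (Fin 2) ℂ), 0] ∘ sub = sub :=
    funext fun i => by simp [sub]
  change aeval ![(X 0 : MvPolynomial (Fin 2) ℂ), 0] (tridiagonal l diag
    (fun i : ℕ => -(C ((i + 1 : ℕ) : ℂ)) * X 0 + C ((i + 1 : ℕ) : ℂ) * X 1) sub).det = _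
  rw [AlgHom.map_det, AlgHom.mapMatrix_apply, tridiagonal_map, hspecialize, hdiag, hsub, hfactor,
    det_mul, det_tridiagonal_of_sup_eq_zero, det_tridiagonal_of_sub_eq_zero]
  simp

/-- Q(λ,0) = λ^l, where Q(λ,R) = det(M₁(λ) + M₂(R)).
Variables: X 0 = λ, X 1 = R; substituting R := 0 yields λ^l. -/
theorem stmt5 (l : ℕ) (hl : 1 ≤ l) :
    aeval ![(X 0 : MvPolynomial (Fin 2) ℂ), 0]
      ((Matrix.of fun i j : Fin l =>
        (if (i : ℕ) = (j : ℕ) then X 0 - C (((i : ℕ) * (l - (i : ℕ)) : ℕ) : ℂ)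
        else if (i : ℕ) + 1 = (j : ℕ) then
          -(C ((((i : ℕ) + 1 : ℕ)) : ℂ)) * X 0 + C ((((i : ℕ) + 1 : ℕ)) : ℂ) * X 1
        else if (j : ℕ) + 1 = (i : ℕ) then C (((l - (i : ℕ) : ℕ)) : ℂ)
        else 0 : MvPolynomial (Fin 2) ℂ)).det)
    = (X 0 : MvPolynomial (Fin 2) ℂ) ^ l :=
  stmt5_general l
end

section
/- Let l ≥ 2. Suppose Q ∈ ℂ[λ,R] is a polynomial of total degree l such that Q(λ,0) = c·λ^l for some c ≠ 0, the coefficient of R in Q is nonzero, and Q(0,0) = 0. Then Q is irreducible in ℂ[λ,R]. -/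
/-!
Specializing `R ↦ 0` sends `Q` to `c λ^l` and cannot raise total degrees. So in a factorization
`Q = A * B` the specializations of `A` and `B` divide `λ^l` and keep the full degrees of `A` and
`B`; if neither factor is a unit, both are then divisible by `λ` after specialization, so `A` and
`B` vanish at the origin, and the coefficient of `R` in `A * B` is zero.
-/

open MvPolynomial

namespace MvPolynomial

variable {σ τ R K : Type*}

theorem totalDegree_aeval_le [CommSemiring R] {f : σ → MvPolynomial τ R}
    (hf : ∀ i, (f i).totalDegree ≤ 1) (p : MvPolynomial σ R) :
    (aeval f p).totalDegree ≤ p.totalDegree := by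
  rw [aeval_def, eval₂_eq]
  refine totalDegree_finsetSum_le fun d hd => ?_
  calc _ ≤ (C (coeff d p) : MvPolynomial τ R).totalDegree
          + (∏ i ∈ d.support, f i ^ d i).totalDegree := totalDegree_mul _ _
    _ ≤ ∑ i ∈ d.support, d i * (f i).totalDegree := by
      rw [totalDegree_C, zero_add]
      exact (totalDegree_finsetProd _ _).trans
        (Finset.sum_le_sum fun i _ => totalDegree_pow _ _)
    _ ≤ ∑ i ∈ d.support, d i := Finset.sum_le_sum fun i _ => by
      simpa using Nat.mul_le_mul_left (d i) (hf i)
    _ ≤ p.totalDegree := le_totalDegree hd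

theorem constantCoeff_aeval [CommSemiring R] {f : σ → MvPolynomial τ R}
    (hf : ∀ i, constantCoeff (f i) = 0) (p : MvPolynomial σ R) :
    constantCoeff (aeval f p) = constantCoeff p := by
  induction p using MvPolynomial.induction_on <;> simp_all

theorem coeff_single_one_mul [CommSemiring R] (i : σ) (p q : MvPolynomial σ R) :
    coeff (Finsupp.single i 1) (p * q) =
      constantCoeff p * coeff (Finsupp.single i 1) q
        + coeff (Finsupp.single i 1) p * constantCoeff q := by
  classical
  rw [coeff_mul, Finsupp.antidiagonal_single]
  simp [Finset.Nat.antidiagonal_succ, constantCoeff_eq]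

theorem totalDegree_pos_of_not_isUnit [Field K] {p : MvPolynomial σ K} (hp0 : p ≠ 0)
    (hp : ¬IsUnit p) : 0 < p.totalDegree := by
  by_contra! h
  rw [totalDegree_eq_zero_iff_eq_C.mp (Nat.le_zero.mp h)] at hp0 hp
  exact hp ((isUnit_iff_ne_zero.mpr fun hr => hp0 (by rw [hr, map_zero])).map C)

theorem constantCoeff_eq_zero_of_dvd_X_pow [CommRing R] [IsDomain R] {p : MvPolynomial σ R}
    {i : σ} {n : ℕ} (h : p ∣ X i ^ n) (hp : 0 < p.totalDegree) : constantCoeff p = 0 := by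
  obtain ⟨k, -, hk⟩ := (dvd_prime_pow X_prime n).mp h
  obtain rfl | hk0 := Nat.eq_zero_or_pos k
  · rw [pow_zero, associated_one_iff_isUnit, isUnit_iff_totalDegree_of_isReduced] at hk
    omega
  · obtain ⟨r, hr⟩ := (dvd_pow_self (X i) hk0.ne').trans hk.symm.dvd
    simp [hr]

section Specialization

variable [Field K] {f : σ → MvPolynomial τ K} {i : τ} {c : K}

theorem constantCoeff_eq_zero_of_aeval_mul_eq_C_mul_X_pow
    (hf_deg : ∀ j, (f j).totalDegree ≤ 1) (hf_cc : ∀ j, constantCoeff (f j) = 0)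
    (hc : c ≠ 0) {A B : MvPolynomial σ K}
    (hAB : aeval f (A * B) = C c * X i ^ (A * B).totalDegree) (hA : ¬IsUnit A) :
    constantCoeff A = 0 := by
  have hCc : IsUnit (C c : MvPolynomial τ K) := (isUnit_iff_ne_zero.mpr hc).map C
  have himage0 : aeval f A * aeval f B ≠ 0 := by
    rw [← map_mul, hAB]
    exact mul_ne_zero hCc.ne_zero (pow_ne_zero _ (X_ne_zero i))
  have hA0 : A ≠ 0 := by rintro rfl; simp at himage0
  have hB0 : B ≠ 0 := by rintro rfl; simp at himage0
  have hdeg : (aeval f A).totalDegree = A.totalDegree := by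
    have hsum := congrArg totalDegree hAB
    rw [map_mul, totalDegree_mul_of_isDomain (left_ne_zero_of_mul himage0)
      (right_ne_zero_of_mul himage0), totalDegree_mul_of_isDomain hCc.ne_zero
      (pow_ne_zero _ (X_ne_zero i)), totalDegree_C, totalDegree_X_pow,
      totalDegree_mul_of_isDomain hA0 hB0] at hsum
    have := totalDegree_aeval_le hf_deg A
    have := totalDegree_aeval_le hf_deg B
    omega
  have hdvd : aeval f A ∣ X i ^ (A * B).totalDegree :=
    (hCc.dvd_mul_left).mp ⟨aeval f B, by rw [← hAB, map_mul]⟩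
  rw [← constantCoeff_aeval hf_cc A]
  exact constantCoeff_eq_zero_of_dvd_X_pow hdvd
    (hdeg ▸ totalDegree_pos_of_not_isUnit hA0 hA)

theorem irreducible_of_aeval_eq_C_mul_X_pow
    (hf_deg : ∀ j, (f j).totalDegree ≤ 1) (hf_cc : ∀ j, constantCoeff (f j) = 0)
    (hc : c ≠ 0) {Q : MvPolynomial σ K} (hQ : aeval f Q = C c * X i ^ Q.totalDegree)
    {j : σ} (hlin : coeff (Finsupp.single j 1) Q ≠ 0) (h00 : constantCoeff Q = 0) :
    Irreducible Q := by
  refine ⟨fun hu => not_isUnit_zero (h00 ▸ hu.map constantCoeff), fun A B hAB => ?_⟩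
  by_contra! hnonunit
  subst hAB
  have hA := constantCoeff_eq_zero_of_aeval_mul_eq_C_mul_X_pow hf_deg hf_cc hc hQ hnonunit.1
  have hB := constantCoeff_eq_zero_of_aeval_mul_eq_C_mul_X_pow hf_deg hf_cc hc
    (mul_comm A B ▸ hQ) hnonunit.2
  exact hlin (by rw [coeff_single_one_mul, hA, hB, zero_mul, mul_zero, add_zero])

end Specialization

end MvPolynomial

theorem stmt6_general (l : ℕ) (Q : MvPolynomial (Fin 2) ℂ)
    (hdeg : Q.totalDegree = l) (c : ℂ) (hc : c ≠ 0)
    (h0 : aeval ![(X 0 : MvPolynomial (Fin 2) ℂ), 0] Q = C c * X 0 ^ l)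
    (hR : MvPolynomial.coeff (Finsupp.single (1 : Fin 2) 1) Q ≠ 0)
    (h00 : constantCoeff Q = 0) :
    Irreducible Q := by
  subst hdeg
  refine irreducible_of_aeval_eq_C_mul_X_pow ?_ ?_ hc h0 hR h00 <;>
    intro j <;> fin_cases j <;> simp

/-- Newton-diagram irreducibility criterion.  If Q ∈ ℂ[λ,R]
(λ = X 0, R = X 1) has total degree l ≥ 2, Q(λ,0) = c·λ^l with c ≠ 0, the
coefficient of R in Q is nonzero, and Q(0,0) = 0, then Q is irreducible. -/
theorem stmt6 (l : ℕ) (hl : 2 ≤ l) (Q : MvPolynomial (Fin 2) ℂ)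
    (hdeg : Q.totalDegree = l) (c : ℂ) (hc : c ≠ 0)
    (h0 : aeval ![(X 0 : MvPolynomial (Fin 2) ℂ), 0] Q = C c * X 0 ^ l)
    (hR : MvPolynomial.coeff (Finsupp.single (1 : Fin 2) 1) Q ≠ 0)
    (h00 : constantCoeff Q = 0) :
    Irreducible Q :=
  stmt6_general l Q hdeg c hc h0 hR h00
end

section
/- Let l ≥ 1 be odd. Setting μ = 0, one has det(𝒢_l + r·Id) = r·∏_{k=1}^{(l-1)/2} (r² - k(l-k)), where 𝒢_l is the l×l matrix with μ on the antidiagonal and -1,…,-(l-1) just below it (with μ = 0 the antidiagonal vanishes). -/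
/-!
At `μ = 0` the only nonzero off-diagonal entries of `𝒢_l` sit at the positions `(i, l - i)`,
`1 ≤ i < l`. For `l = 2m + 1` the indices `k + 1` and `2m - k` (`k < m`) are thus paired with each
other and `0` with nothing, so reordering the indices as `0, (1, 2m), (2, 2m - 1), …` turns
`𝒢_l + r Id` into `(r) ⊕ ⨁ₖ [[r, -(k+1)], [-(2m-k), r]]`, whose determinant is
`r ∏ₖ (r² - (k+1)(2m-k))`.
-/

open Matrix Polynomial

def pairIndex (m : ℕ) : Fin 1 ⊕ Fin 2 × Fin m → Fin (2 * m + 1)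
  | .inl _ => 0
  | .inr (a, k) => if a = 0 then ⟨k + 1, by omega⟩ else ⟨2 * m - k, by omega⟩

@[simp] lemma pairIndex_inl (m : ℕ) (x : Fin 1) : pairIndex m (.inl x) = 0 := rfl

@[simp] lemma val_pairIndex_inr_zero (m : ℕ) (k : Fin m) :
    (pairIndex m (.inr (0, k)) : ℕ) = k + 1 := rfl

@[simp] lemma val_pairIndex_inr_one (m : ℕ) (k : Fin m) :
    (pairIndex m (.inr (1, k)) : ℕ) = 2 * m - k := rfl

lemma pairIndex_inr_ne_zero (m : ℕ) (a : Fin 2) (k : Fin m) : pairIndex m (.inr (a, k)) ≠ 0 := by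
  rw [Ne, Fin.ext_iff]
  fin_cases a <;> simp only [Fin.zero_eta, Fin.mk_one, val_pairIndex_inr_zero,
    val_pairIndex_inr_one, Fin.val_zero] <;> omega

lemma pairIndex_injective (m : ℕ) : Function.Injective (pairIndex m) := by
  rintro (x | ⟨a, k⟩) (y | ⟨b, p⟩) h <;> rw [Fin.ext_iff] at h
  · rw [Subsingleton.elim x y]
  · exact absurd (Fin.ext h).symm (pairIndex_inr_ne_zero m b p)
  · exact absurd (Fin.ext h) (pairIndex_inr_ne_zero m a k)
  · fin_cases a <;> fin_cases b <;> simp [Fin.ext_iff] at h ⊢ <;> omega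

lemma val_pairIndex_add_val_pairIndex_inr (m : ℕ) (a b : Fin 2) (k p : Fin m) :
    (pairIndex m (.inr (a, k)) : ℕ) + pairIndex m (.inr (b, p)) = 2 * m + 1 ↔ a ≠ b ∧ k = p := by
  fin_cases a <;> fin_cases b <;> simp [Fin.ext_iff] <;> omega

noncomputable def pairIndexEquiv (m : ℕ) : Fin 1 ⊕ Fin 2 × Fin m ≃ Fin (2 * m + 1) :=
  .ofBijective _ <| (Fintype.bijective_iff_injective_and_card _).2
    ⟨pairIndex_injective m, by simp; omega⟩

/-- `𝒢_l(0) + X • 1`, with `0`-based indices: row `i` carries `-i` in column `l - i`. -/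
noncomputable def gPencil (R : Type*) [CommRing R] (l : ℕ) : Matrix (Fin l) (Fin l) R[X] :=
  of fun i j => (if (i : ℕ) + j = l then -C (i : R) else 0) + if i = j then X else 0

variable {R : Type*} [CommRing R]

noncomputable def pairBlock (m : ℕ) (k : Fin m) : Matrix (Fin 2) (Fin 2) R[X] :=
  !![X, -C ((k + 1 : ℕ) : R); -C ((2 * m - k : ℕ) : R), X]

lemma gPencil_submatrix_pairIndexEquiv (m : ℕ) :
    (gPencil R (2 * m + 1)).submatrix (pairIndexEquiv m) (pairIndexEquiv m) =
      fromBlocks (of fun _ _ => X) 0 0 (blockDiagonal (pairBlock m)) := by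
  ext (x | ⟨a, k⟩) (y | ⟨b, p⟩) : 1
  · simp [gPencil, pairIndexEquiv]
  · simp [gPencil, pairIndexEquiv, (pairIndex_inr_ne_zero m b p).symm]
  · simp [gPencil, pairIndexEquiv, pairIndex_inr_ne_zero, (pairIndex m (.inr (a, k))).isLt.ne]
  · simp only [gPencil, pairIndexEquiv, submatrix_apply, Equiv.ofBijective_apply, of_apply,
      val_pairIndex_add_val_pairIndex_inr, (pairIndex_injective m).eq_iff, fromBlocks_apply₂₂,
      blockDiagonal_apply]
    by_cases hkp : k = p
    · subst hkp
      fin_cases a <;> fin_cases b <;> simp [pairBlock]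
    · simp [hkp]

lemma det_pairBlock (m : ℕ) (k : Fin m) :
    (pairBlock m k).det = X ^ 2 - C (((k + 1) * (2 * m + 1 - (k + 1)) : ℕ) : R) := by
  rw [pairBlock, det_fin_two_of, show 2 * m + 1 - (k + 1) = 2 * m - k by omega, Nat.cast_mul, C_mul]
  ring

theorem det_gPencil_odd (m : ℕ) :
    (gPencil R (2 * m + 1)).det =
      X * ∏ k ∈ Finset.range m, (X ^ 2 - C (((k + 1) * (2 * m + 1 - (k + 1)) : ℕ) : R)) := by
  rw [← det_submatrix_equiv_self (pairIndexEquiv m), gPencil_submatrix_pairIndexEquiv,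
    det_fromBlocks_zero₂₁, det_blockDiagonal, det_unique, ← Fin.prod_univ_eq_prod_range]
  simp only [of_apply, det_pairBlock]

theorem stmt12_general (l : ℕ) (hodd : Odd l) :
    (Matrix.of fun i j : Fin l =>
      ((if (i : ℕ) + (j : ℕ) = l then -(C (((i : ℕ) : ℕ) : ℂ)) else 0)
       + (if i = j then X else 0) : Polynomial ℂ)).det
    = X * ∏ k ∈ Finset.range ((l - 1) / 2),
        (X ^ 2 - C ((((k + 1) * (l - (k + 1)) : ℕ)) : ℂ)) := by
  obtain ⟨m, rfl⟩ := hodd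
  rw [show (2 * m + 1 - 1) / 2 = m by omega]
  exact det_gPencil_odd m

/-- for odd l, at μ = 0,
det(𝒢_l + r·Id) = r·∏_{k=1}^{(l-1)/2} (r² - k(l-k)).  Here r = X. -/
theorem stmt12 (l : ℕ) (hl : 1 ≤ l) (hodd : Odd l) :
    (Matrix.of fun i j : Fin l =>
      ((if (i : ℕ) + (j : ℕ) = l then -(C (((i : ℕ) : ℕ) : ℂ)) else 0)
       + (if i = j then X else 0) : Polynomial ℂ)).det
    = X * ∏ k ∈ Finset.range ((l - 1) / 2),
        (X ^ 2 - C ((((k + 1) * (l - (k + 1)) : ℕ)) : ℂ)) :=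
  stmt12_general l hodd
end

section
/- Let l ≥ 2 be even. Setting μ = 0, one has det(𝒢_l + r·Id) = r·(r - l/2)·∏_{k=1}^{(l-2)/2} (r² - k(l-k)), and this polynomial in r has no multiple roots. -/
/-!
Write `l = 2m + 2`. Off the diagonal, `𝒢_l(0) + X·Id` only couples row `k + 1` with row
`2m + 1 - k` (`k < m`), while rows `0` and `m + 1` are coupled with nothing. Reordering the
indices therefore makes the matrix block diagonal with blocks `(X)`, `(X - (m + 1))` and
`[[X, -(k + 1)], [-(2m + 1 - k), X]]`, which gives the product formula.
The factors are separable and pairwise coprime because `(k + 1)(2m + 1 - k) = (m + 1)² - (m - k)²`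
takes pairwise distinct values strictly between `0` and `(m + 1)²`.
-/

open Matrix Polynomial

section Determinant

variable {R : Type*} [CommRing R]

/-- With 0-based indices `𝒢_l(0)` has the entry `-i` at `(i, l - i)` for `0 < i < l`, so
`antidiagCharmatrix Nat.cast l = 𝒢_l(0) + X • 1`. -/
noncomputable def antidiagCharmatrix (f : ℕ → R) (l : ℕ) : Matrix (Fin l) (Fin l) R[X] :=
  of fun i j => (if (i : ℕ) + j = l then -C (f i) else 0) + (if i = j then X else 0)

def antidiagBlockIndex (m : ℕ) : Fin 2 ⊕ Fin 2 × Fin m → Fin (2 * m + 2)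
  | .inl a => ![0, ⟨m + 1, by omega⟩] a
  | .inr (a, k) => ![⟨k + 1, by omega⟩, ⟨2 * m + 1 - k, by omega⟩] a

theorem antidiagBlockIndex_bijective (m : ℕ) : Function.Bijective (antidiagBlockIndex m) := by
  refine (Fintype.bijective_iff_injective_and_card _).2 ⟨?_, by simp; ring⟩
  rintro (a | ⟨a, k⟩) (b | ⟨b, k'⟩) h <;> fin_cases a <;> fin_cases b <;>
    simp [antidiagBlockIndex, Fin.ext_iff] at h ⊢ <;> omega

theorem submatrix_antidiagCharmatrix (f : ℕ → R) (m : ℕ) :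
    (antidiagCharmatrix f (2 * m + 2)).submatrix (antidiagBlockIndex m) (antidiagBlockIndex m) =
      fromBlocks (diagonal ![X, X - C (f (m + 1))]) 0 0
        (blockDiagonal fun k : Fin m => !![X, -C (f (k + 1)); -C (f (2 * m + 1 - k)), X]) := by
  ext (a | ⟨a, k⟩) (b | ⟨b, k'⟩) : 1 <;> fin_cases a <;> fin_cases b <;>
    simp [antidiagCharmatrix, antidiagBlockIndex, blockDiagonal_apply, Fin.ext_iff] <;> grind

theorem det_antidiagCharmatrix (f : ℕ → R) (m : ℕ) :
    (antidiagCharmatrix f (2 * m + 2)).det =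
      X * (X - C (f (m + 1))) *
        ∏ k ∈ Finset.range m, (X ^ 2 - C (f (k + 1) * f (2 * m + 1 - k))) := by
  rw [← det_submatrix_equiv_self (Equiv.ofBijective _ (antidiagBlockIndex_bijective m)),
    Equiv.coe_ofBijective, submatrix_antidiagCharmatrix, det_fromBlocks_zero₂₁, det_diagonal,
    det_blockDiagonal, Fin.prod_univ_two, ← Fin.prod_univ_eq_prod_range]
  simp [det_fin_two_of, sq]

end Determinant

section Separable

variable {K : Type*} [Field K]

theorem isCoprime_X_sub_C_of_not_isRoot {p : K[X]} {c : K} (h : ¬p.IsRoot c) :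
    IsCoprime (X - C c) p :=
  (irreducible_X_sub_C c).coprime_iff_not_dvd.2 (mt dvd_iff_isRoot.1 h)

theorem isCoprime_X_of_not_isRoot {p : K[X]} (h : ¬p.IsRoot 0) : IsCoprime X p := by
  simpa using isCoprime_X_sub_C_of_not_isRoot h

theorem isCoprime_sub_C_sub_C (p : K[X]) {a b : K} (hab : a ≠ b) :
    IsCoprime (p - C a) (p - C b) :=
  ⟨C (b - a)⁻¹, -C (b - a)⁻¹, by
    rw [neg_mul, ← sub_eq_add_neg, ← mul_sub, sub_sub_sub_cancel_left, ← C_sub, ← C_mul,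
      inv_mul_cancel₀ (sub_ne_zero.2 hab.symm), C_1]⟩

theorem separable_X_mul_X_sub_C_mul_prod_X_sq_sub_C [NeZero (2 : K)] {ι : Type*}
    {s : Finset ι} {a : ι → K} {c : K} (hc : c ≠ 0) (ha : ∀ k ∈ s, a k ≠ 0)
    (hac : ∀ k ∈ s, a k ≠ c ^ 2) (hinj : Set.InjOn a s) :
    (X * (X - C c) * ∏ k ∈ s, (X ^ 2 - C (a k))).Separable := by
  have hprod : (∏ k ∈ s, (X ^ 2 - C (a k))).Separable :=
    separable_prod' (fun k hk j hj hkj => isCoprime_sub_C_sub_C _ (hinj.ne hk hj hkj))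
      fun k hk => separable_X_pow_sub_C _ (by exact_mod_cast two_ne_zero) (ha k hk)
  have hX : IsCoprime X (X - C c) := isCoprime_X_of_not_isRoot (by simpa using hc)
  have hXprod : IsCoprime X (∏ k ∈ s, (X ^ 2 - C (a k))) :=
    IsCoprime.prod_right fun k hk => isCoprime_X_of_not_isRoot (by simpa using ha k hk)
  have hcprod : IsCoprime (X - C c) (∏ k ∈ s, (X ^ 2 - C (a k))) :=
    IsCoprime.prod_right fun k hk =>
      isCoprime_X_sub_C_of_not_isRoot (by simpa [sub_eq_zero] using (hac k hk).symm)
  exact (separable_X.mul separable_X_sub_C hX).mul hprod (hXprod.mul_left hcprod)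

end Separable

theorem succ_mul_sub_add_sq_sub {k m : ℕ} (hk : k ≤ m) :
    (k + 1) * (2 * m + 1 - k) + (m - k) ^ 2 = (m + 1) ^ 2 := by
  obtain ⟨d, rfl⟩ := Nat.exists_eq_add_of_le hk
  rw [show 2 * (k + d) + 1 - k = k + 2 * d + 1 by omega, Nat.add_sub_cancel_left]
  ring

theorem squarefree_det_antidiagCharmatrix_natCast {K : Type*} [Field K] [CharZero K] (m : ℕ) :
    Squarefree (antidiagCharmatrix (fun i : ℕ => (i : K)) (2 * m + 2)).det := by
  have hsq : ∀ k ∈ Finset.range m, (k + 1) * (2 * m + 1 - k) + (m - k) ^ 2 = (m + 1) ^ 2 :=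
    fun k hk => succ_mul_sub_add_sq_sub (Finset.mem_range.1 hk).le
  rw [det_antidiagCharmatrix]
  simp_rw [← Nat.cast_mul]
  refine (separable_X_mul_X_sub_C_mul_prod_X_sq_sub_C (Nat.cast_ne_zero.2 m.succ_ne_zero)
    (fun k hk => Nat.cast_ne_zero.2 ?_) (fun k hk => ?_)
    (Nat.cast_injective.comp_injOn ?_)).squarefree
  · exact (Nat.mul_pos k.succ_pos (by have := Finset.mem_range.1 hk; omega)).ne'
  · rw [Function.comp_apply, ← Nat.cast_pow, Ne, Nat.cast_inj]
    have hgap : 0 < (m - k) ^ 2 := pow_pos (Nat.sub_pos_of_lt (Finset.mem_range.1 hk)) 2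
    have := hsq k hk
    omega
  · intro k hk j hj h
    have hk' := hsq k hk
    have hj' := hsq j hj
    simp only [Finset.coe_range, Set.mem_Iio] at hk hj
    have : m - k = m - j := Nat.pow_left_injective two_ne_zero (by simp only at h ⊢; linarith)
    omega

/-- for even l ≥ 2, at μ = 0,
det(𝒢_l + r·Id) = r·(r - l/2)·∏_{k=1}^{(l-2)/2} (r² - k(l-k)), and this
polynomial in r has no multiple roots (it is squarefree).  Here r = X. -/
theorem stmt13 (l : ℕ) (hl : 2 ≤ l) (heven : Even l) :
    (Matrix.of fun i j : Fin l =>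
      ((if (i : ℕ) + (j : ℕ) = l then -(C (((i : ℕ) : ℕ) : ℂ)) else 0)
       + (if i = j then X else 0) : Polynomial ℂ)).det
    = X * (X - C (((l / 2 : ℕ)) : ℂ)) * ∏ k ∈ Finset.range ((l - 2) / 2),
        (X ^ 2 - C ((((k + 1) * (l - (k + 1)) : ℕ)) : ℂ))
    ∧ Squarefree
      ((Matrix.of fun i j : Fin l =>
        ((if (i : ℕ) + (j : ℕ) = l then -(C (((i : ℕ) : ℕ) : ℂ)) else 0)
         + (if i = j then X else 0) : Polynomial ℂ)).det) := by
  obtain ⟨m, rfl⟩ : ∃ m, l = 2 * m + 2 := ⟨l / 2 - 1, by rcases heven with ⟨t, rfl⟩; omega⟩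
  show (antidiagCharmatrix (fun i : ℕ => (i : ℂ)) (2 * m + 2)).det = _ ∧ _
  refine ⟨?_, squarefree_det_antidiagCharmatrix_natCast m⟩
  rw [det_antidiagCharmatrix, show (2 * m + 2) / 2 = m + 1 by omega,
    show (2 * m + 2 - 2) / 2 = m by omega]
  refine congrArg _ (Finset.prod_congr rfl fun k _ => ?_)
  rw [show 2 * m + 2 - (k + 1) = 2 * m + 1 - k by omega, Nat.cast_mul]
end

section
/- For every l ≥ 1 and every real μ₀ > 0, the line {μ = μ₀} intersects the real curve Γ_l = {(λ,μ) ∈ ℝ² : P_l(λ,μ²) = 0} in exactly l distinct points, each of which is a regular (smooth) point of the curve at which the line {μ = μ₀} is not tangent to Γ_l. -/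
/-!
After the index shift `j = i + 1`, the matrix `H_l + λ Id` is tridiagonal with off-diagonal
products `μ² (i + 1) (l - 1 - i) > 0`; conjugating by `diag √C(l-1, i)` turns it into `λ Id - M`
with `M` real symmetric, so `P_l(λ, μ²)` is the characteristic polynomial of `M` and its roots are
the eigenvalues of `M`. Deleting the first row and last column of `λ Id - M` leaves a triangular
matrix with nonzero diagonal, so `λ Id - M` has rank at least `l - 1` for every `λ`; since `M` is
diagonalisable, every eigenvalue is simple, and the derivative of `∏ (λ - λ_k)` does not vanish at
its simple roots.
-/

open Matrix Polynomial Lagrange Finset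

namespace Matrix

section Hermitian

variable {n : Type*} [Fintype n] [DecidableEq n] {A : Matrix n n ℝ}

lemma IsHermitian.charpoly_eq_nodal (hA : A.IsHermitian) :
    A.charpoly = nodal univ hA.eigenvalues := by
  simp [hA.charpoly_eq, nodal]

lemma IsHermitian.scalar_sub_eq_conj_diagonal (hA : A.IsHermitian) (t : ℝ) :
    scalar n t - A = Unitary.conjStarAlgAut ℝ _ hA.eigenvectorUnitary
      (diagonal fun i => t - hA.eigenvalues i) := by
  change algebraMap ℝ (Matrix n n ℝ) t - A = _
  conv_lhs => rw [hA.spectral_theorem,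
    ← AlgHomClass.commutes (Unitary.conjStarAlgAut ℝ _ hA.eigenvectorUnitary) t]
  rw [← map_sub, algebraMap_eq_diagonal, diagonal_sub]
  rfl

lemma IsHermitian.rank_scalar_sub (hA : A.IsHermitian) (t : ℝ) :
    (scalar n t - A).rank = Fintype.card {i // hA.eigenvalues i ≠ t} := by
  rw [hA.scalar_sub_eq_conj_diagonal, Unitary.conjStarAlgAut_apply, ← Unitary.coe_star,
    rank_mul_eq_left_of_isUnit_det _ _ (UnitaryGroup.det_isUnit _),
    rank_mul_eq_right_of_isUnit_det _ _ (UnitaryGroup.det_isUnit _), rank_diagonal]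
  simp_rw [sub_ne_zero, ne_comm]

lemma IsHermitian.eigenvalues_injective_of_rank (hA : A.IsHermitian)
    (hrank : ∀ t, Fintype.card n - 1 ≤ (scalar n t - A).rank) :
    Function.Injective hA.eigenvalues := by
  intro i j hij
  by_contra hne
  have hge := hrank (hA.eigenvalues i)
  rw [hA.rank_scalar_sub, Fintype.card_subtype] at hge
  simp only [ne_eq] at hge
  have hpair : 2 ≤ #{k | hA.eigenvalues k = hA.eigenvalues i} :=
    calc 2 = #{i, j} := (card_pair hne).symm
      _ ≤ _ := card_le_card (by simp [insert_subset_iff, hij])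
  have hsplit := card_filter_add_card_filter_not (s := univ)
    (fun k => hA.eigenvalues k = hA.eigenvalues i)
  rw [card_univ] at hsplit
  omega

end Hermitian

lemma sub_one_le_rank_of_hessenberg {K : Type*} [Field K] {n : ℕ}
    (A : Matrix (Fin n) (Fin n) K) (hzero : ∀ i j : Fin n, (j : ℕ) + 1 < i → A i j = 0)
    (hsub : ∀ i j : Fin n, (j : ℕ) + 1 = i → A i j ≠ 0) : n - 1 ≤ A.rank := by
  let B := A.submatrix (fun k : Fin (n - 1) => ⟨(k : ℕ) + 1, by omega⟩)
    (fun k : Fin (n - 1) => ⟨k, by omega⟩)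
  have hB : B.IsUpperTriangular := fun i j hij => hzero _ _ (by simp at hij ⊢; omega)
  have hdet : B.det ≠ 0 := by
    rw [det_of_isUpperTriangular hB]
    exact prod_ne_zero_iff.mpr fun k _ => hsub _ _ rfl
  calc n - 1 = B.rank := by
        rw [rank_of_isUnit _ ((isUnit_iff_isUnit_det _).mpr hdet.isUnit), Fintype.card_fin]
    _ ≤ A.rank := rank_submatrix_le _ _ _

end Matrix

lemma sqrt_mul_sqrt_mul_eq_of_mul_eq {a b x y : ℝ} (ha : 0 ≤ a) (hx : 0 ≤ x)
    (h : b * x = a * y) : √a * √(x * y) = x * √b := by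
  rw [← Real.sqrt_mul ha, show a * (x * y) = x ^ 2 * b by linear_combination -x * h,
    Real.sqrt_mul (sq_nonneg x), Real.sqrt_sq hx]

lemma sqrt_choose_mul_sqrt (m i : ℕ) :
    √(m.choose i : ℝ) * √(((i + 1) * (m - i) : ℕ) : ℝ) =
      ((i + 1 : ℕ) : ℝ) * √(m.choose (i + 1)) := by
  rw [Nat.cast_mul]
  exact sqrt_mul_sqrt_mul_eq_of_mul_eq (by positivity) (by positivity)
    (by exact_mod_cast Nat.choose_succ_right_eq m i)

lemma sqrt_choose_succ_mul_sqrt (m i : ℕ) :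
    √(m.choose (i + 1) : ℝ) * √(((i + 1) * (m - i) : ℕ) : ℝ) =
      ((m - i : ℕ) : ℝ) * √(m.choose i) := by
  rw [Nat.cast_mul, mul_comm ((i + 1 : ℕ) : ℝ)]
  exact sqrt_mul_sqrt_mul_eq_of_mul_eq (by positivity) (by positivity)
    (by exact_mod_cast (Nat.choose_succ_right_eq m i).symm)

/-- `H_l + t Id` in the paper's notation, with rows and columns indexed by `i = j - 1`. -/
noncomputable def shiftedH (l : ℕ) (μ t : ℝ) : Matrix (Fin l) (Fin l) ℝ :=
  Matrix.of fun i j : Fin l =>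
    (if (i : ℕ) = (j : ℕ) then t - (((i : ℕ) * (l - (i : ℕ)) : ℕ) : ℝ)
    else if (i : ℕ) + 1 = (j : ℕ) then μ * (((i : ℕ) + 1 : ℕ) : ℝ)
    else if (j : ℕ) + 1 = (i : ℕ) then μ * (((l - (i : ℕ) : ℕ)) : ℝ)
    else 0 : ℝ)

noncomputable def symmH (l : ℕ) (μ : ℝ) : Matrix (Fin l) (Fin l) ℝ :=
  Matrix.of fun i j : Fin l =>
    if (i : ℕ) = j then (((i : ℕ) * (l - i) : ℕ) : ℝ)
    else if (i : ℕ) + 1 = j then -(μ * √((((i : ℕ) + 1) * (l - 1 - i) : ℕ) : ℝ))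
    else if (j : ℕ) + 1 = i then -(μ * √((((j : ℕ) + 1) * (l - 1 - j) : ℕ) : ℝ))
    else 0

lemma symmH_isHermitian (l : ℕ) (μ : ℝ) : (symmH l μ).IsHermitian := by
  ext i j
  rcases eq_or_ne i j with rfl | h
  · rfl
  simp only [conjTranspose_apply, symmH, of_apply, star_trivial, Fin.val_ne_of_ne h,
    Fin.val_ne_of_ne h.symm, if_false]
  split_ifs <;> first | rfl | omega

lemma sub_one_le_rank_scalar_sub_symmH {l : ℕ} {μ : ℝ} (hμ : μ ≠ 0) (t : ℝ) :
    l - 1 ≤ (scalar (Fin l) t - symmH l μ).rank := by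
  refine sub_one_le_rank_of_hessenberg _ (fun i j hij => ?_) (fun i j hij => ?_)
  · simp only [Matrix.sub_apply, scalar_apply, symmH, of_apply,
      diagonal_apply_ne _ (Fin.ne_of_val_ne (by omega : (i : ℕ) ≠ j)),
      if_neg (by omega : (i : ℕ) ≠ j), if_neg (by omega : (i : ℕ) + 1 ≠ j),
      if_neg (by omega : (j : ℕ) + 1 ≠ i), sub_zero]
  · have hpos : (0 : ℝ) < (((j : ℕ) + 1) * (l - 1 - j) : ℕ) := by
      have := i.isLt
      exact_mod_cast Nat.mul_pos (by omega) (by omega)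
    simp only [symmH, Matrix.sub_apply, scalar_apply, of_apply,
      diagonal_apply_ne _ (Fin.ne_of_val_ne (by omega : (i : ℕ) ≠ j)),
      if_neg (by omega : (i : ℕ) ≠ j), if_neg (by omega : (i : ℕ) + 1 ≠ j), if_pos hij,
      zero_sub, neg_neg]
    exact mul_ne_zero hμ (Real.sqrt_pos.mpr hpos).ne'

lemma diagonal_sqrt_choose_conj (l : ℕ) (μ t : ℝ) :
    diagonal (fun i : Fin l => √((l - 1).choose i : ℝ)) * (scalar (Fin l) t - symmH l μ) =
      shiftedH l μ t * diagonal (fun i : Fin l => √((l - 1).choose i : ℝ)) := by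
  ext i j
  rw [diagonal_mul, mul_diagonal]
  simp only [Matrix.sub_apply, scalar_apply, diagonal_apply, symmH, shiftedH, of_apply, Fin.ext_iff]
  rcases eq_or_ne (i : ℕ) (j : ℕ) with h | h
  · simp [Fin.ext h, mul_comm]
  · rw [if_neg h, if_neg h, if_neg h]
    split_ifs with h1 h2
    · rw [← h1]
      linear_combination μ * sqrt_choose_mul_sqrt (l - 1) i
    · rw [show l - (i : ℕ) = l - 1 - j by omega, ← h2]
      linear_combination μ * sqrt_choose_succ_mul_sqrt (l - 1) j
    · ring

lemma det_shiftedH (l : ℕ) (μ t : ℝ) :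
    (shiftedH l μ t).det = (scalar (Fin l) t - symmH l μ).det := by
  have hD : (diagonal (fun i : Fin l => √((l - 1).choose i : ℝ))).det ≠ 0 := by
    rw [det_diagonal]
    refine prod_ne_zero_iff.mpr fun i _ => (Real.sqrt_pos.mpr ?_).ne'
    exact_mod_cast Nat.choose_pos (by omega)
  have h := congrArg det (diagonal_sqrt_choose_conj l μ t)
  rw [det_mul, det_mul, mul_comm (shiftedH l μ t).det] at h
  exact (mul_left_cancel₀ hD h).symm

theorem stmt14_general (l : ℕ) (mu0 : ℝ) (hmu0 : 0 < mu0) :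
    ∃ S : Finset ℝ, S.card = l ∧
      (∀ lam : ℝ,
        (Matrix.of fun i j : Fin l =>
          (if (i : ℕ) = (j : ℕ) then lam - (((i : ℕ) * (l - (i : ℕ)) : ℕ) : ℝ)
          else if (i : ℕ) + 1 = (j : ℕ) then mu0 * (((i : ℕ) + 1 : ℕ) : ℝ)
          else if (j : ℕ) + 1 = (i : ℕ) then mu0 * (((l - (i : ℕ) : ℕ)) : ℝ)
          else 0 : ℝ)).det = 0 ↔ lam ∈ S) ∧
      ∀ lam ∈ S,
        deriv (fun t : ℝ =>
          (Matrix.of fun i j : Fin l =>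
            (if (i : ℕ) = (j : ℕ) then t - (((i : ℕ) * (l - (i : ℕ)) : ℕ) : ℝ)
            else if (i : ℕ) + 1 = (j : ℕ) then mu0 * (((i : ℕ) + 1 : ℕ) : ℝ)
            else if (j : ℕ) + 1 = (i : ℕ) then mu0 * (((l - (i : ℕ) : ℕ)) : ℝ)
            else 0 : ℝ)).det) lam ≠ 0 := by
  change ∃ S : Finset ℝ, S.card = l ∧ (∀ lam, (shiftedH l mu0 lam).det = 0 ↔ lam ∈ S) ∧
    ∀ lam ∈ S, deriv (fun t => (shiftedH l mu0 t).det) lam ≠ 0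
  have hA := symmH_isHermitian l mu0
  have hinj : Function.Injective hA.eigenvalues := hA.eigenvalues_injective_of_rank
    (by simpa using sub_one_le_rank_scalar_sub_symmH hmu0.ne')
  have hdet : (fun t => (shiftedH l mu0 t).det) =
      fun t => (nodal univ hA.eigenvalues).eval t := by
    funext t
    rw [det_shiftedH, ← eval_charpoly, hA.charpoly_eq_nodal]
  refine ⟨univ.image hA.eigenvalues, by simp [card_image_of_injective _ hinj], fun lam => ?_, ?_⟩
  · rw [congrFun hdet lam, eval_nodal, prod_eq_zero_iff]
    simp only [mem_univ, true_and, sub_eq_zero, mem_image]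
    exact exists_congr fun k => eq_comm
  · intro _ hlam
    obtain ⟨k, -, rfl⟩ := mem_image.mp hlam
    rw [hdet, Polynomial.deriv, eval_nodal_derivative_eval_node_eq (mem_univ k)]
    exact eval_nodal_not_at_node fun j hj => hinj.ne (mem_erase.mp hj).1.symm

/-- for μ₀ > 0 the horizontal line {μ = μ₀} meets the real spectral
curve Γ_l = {F(λ,μ) = 0}, F(λ,μ) = det(H_l(μ) + λ·Id), in exactly l distinct
points; each is a regular point of the curve where the line is not tangent
(∂F/∂λ ≠ 0 there). -/
theorem stmt14 (l : ℕ) (hl : 1 ≤ l) (mu0 : ℝ) (hmu0 : 0 < mu0) :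
    ∃ S : Finset ℝ, S.card = l ∧
      (∀ lam : ℝ,
        (Matrix.of fun i j : Fin l =>
          (if (i : ℕ) = (j : ℕ) then lam - (((i : ℕ) * (l - (i : ℕ)) : ℕ) : ℝ)
          else if (i : ℕ) + 1 = (j : ℕ) then mu0 * (((i : ℕ) + 1 : ℕ) : ℝ)
          else if (j : ℕ) + 1 = (i : ℕ) then mu0 * (((l - (i : ℕ) : ℕ)) : ℝ)
          else 0 : ℝ)).det = 0 ↔ lam ∈ S) ∧
      ∀ lam ∈ S,
        deriv (fun t : ℝ =>
          (Matrix.of fun i j : Fin l =>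
            (if (i : ℕ) = (j : ℕ) then t - (((i : ℕ) * (l - (i : ℕ)) : ℕ) : ℝ)
            else if (i : ℕ) + 1 = (j : ℕ) then mu0 * (((i : ℕ) + 1 : ℕ) : ℝ)
            else if (j : ℕ) + 1 = (i : ℕ) then mu0 * (((l - (i : ℕ) : ℕ)) : ℝ)
            else 0 : ℝ)).det) lam ≠ 0 :=
  stmt14_general l mu0 hmu0
end

section
/- For every l ≥ 1, the projective closure of the complex curve Γ_l = {P_l(λ,μ²) = 0} ⊂ ℂ² intersects the line at infinity transversely in exactly l distinct points, corresponding to the asymptotic directions λ/μ = l-1, l-3, …, -(l-1); in particular the point at infinity of the λ-axis does not lie on the closure of Γ_l. -/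
/-!
The top-degree part of `det (H_l + λ Id)` is `det (λ Id + μ B)`, where `B` is the
Sylvester–Kac matrix; the constant diagonal of `H_l` only contributes terms of degree `< l`.
In the monomial basis of polynomials of degree `< l`, `B` is the matrix of the operator
`p ↦ (1 - x²) p' + (l - 1) x p`, whose eigenvectors are `(1 + x)^k (1 - x)^(l - 1 - k)` with the
pairwise distinct eigenvalues `2k - (l - 1)`. Hence `B` is diagonalizable and
`det (λ Id + μ B) = ∏ (λ + (2k - l + 1) μ)`, a product of distinct linear forms whose
`λ^l`-coefficient is `1`.
-/

section KacMatrix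

open Polynomial Matrix

variable {K : Type*} [CommRing K]

noncomputable def kacOperator (n : ℕ) (p : K[X]) : K[X] :=
  (1 - X ^ 2) * derivative p + C (n : K) * X * p

lemma kacOperator_coeff_zero (n : ℕ) (p : K[X]) :
    (kacOperator n p).coeff 0 = p.coeff 1 := by
  simp [kacOperator, sub_mul, coeff_derivative, mul_assoc]

lemma kacOperator_coeff_succ (n i : ℕ) (p : K[X]) :
    (kacOperator n p).coeff (i + 1)
      = (i + 2 : K) * p.coeff (i + 2) + ((n : K) - i) * p.coeff i := by
  rcases i with _ | i <;>
    simp [kacOperator, sub_mul, coeff_derivative, mul_assoc, coeff_X_pow_mul', coeff_X_mul] <;>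
    ring

variable (K) in
def kacMatrix (l : ℕ) : Matrix (Fin l) (Fin l) K :=
  Matrix.of fun i j =>
    if (i : ℕ) + 1 = j then (i + 1 : K) else if (j : ℕ) + 1 = i then ((l - i : ℕ) : K) else 0

lemma kacMatrix_mulVec_coeff {l : ℕ} (p : K[X]) (hp : p.degree < l) :
    kacMatrix K l *ᵥ (fun i => p.coeff i) = fun i : Fin l => (kacOperator (l - 1) p).coeff i := by
  funext i
  have hp' : ∀ n, l ≤ n → p.coeff n = 0 := fun n hn =>
    coeff_eq_zero_of_degree_lt (hp.trans_le (by exact_mod_cast hn))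
  have hsplit : ∀ j : ℕ, (if (i : ℕ) + 1 = j then (i + 1 : K) else
      if j + 1 = i then ((l - i : ℕ) : K) else 0) * p.coeff j
      = (if (i : ℕ) + 1 = j then (i + 1 : K) * p.coeff j else 0)
        + (if j + 1 = i then ((l - i : ℕ) : K) * p.coeff j else 0) := by
    intro j; split_ifs <;> first | omega | ring
  simp only [mulVec, dotProduct, kacMatrix, of_apply, hsplit, Finset.sum_add_distrib]
  rw [Fin.sum_univ_eq_sum_range (fun j => if (i : ℕ) + 1 = j then (i + 1 : K) * p.coeff j else 0),
    Fin.sum_univ_eq_sum_range (fun j => if j + 1 = i then ((l - i : ℕ) : K) * p.coeff j else 0),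
    Finset.sum_ite_eq]
  obtain ⟨_ | m, hi⟩ := i
  · simpa [kacOperator_coeff_zero] using fun h => (hp' 1 h).symm
  · simp only [kacOperator_coeff_succ, Finset.mem_range, add_left_inj, Finset.sum_ite_eq']
    rw [if_pos (by omega : m < l), Nat.cast_sub (by omega : m + 1 ≤ l),
      Nat.cast_sub (by omega : 1 ≤ l)]
    split_ifs
    · push_cast; ring
    · rw [hp' (m + 1 + 1) (by omega)]; push_cast; ring

lemma kacOperator_one_add_X_pow_mul_one_sub_X_pow (a b : ℕ) :
    kacOperator (a + b) ((1 + X) ^ a * (1 - X) ^ b : K[X])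
      = C ((a : K) - b) * ((1 + X) ^ a * (1 - X) ^ b) := by
  rcases a with _ | a <;> rcases b with _ | b <;>
    simp [kacOperator, derivative_pow] <;> ring

variable (K) in
noncomputable def kacEigenvectors (l : ℕ) : Matrix (Fin l) (Fin l) K :=
  Matrix.of fun i k => ((1 + X) ^ (k : ℕ) * (1 - X) ^ (l - 1 - k) : K[X]).coeff i

lemma kacMatrix_mul_kacEigenvectors (l : ℕ) :
    kacMatrix K l * kacEigenvectors K l
      = kacEigenvectors K l * diagonal (fun k : Fin l => 2 * (k : K) - (l - 1)) := by
  ext i k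
  obtain ⟨b, hb⟩ : ∃ b, (k : ℕ) + b + 1 = l := ⟨l - 1 - k, by omega⟩
  have hdeg : ((1 + X) ^ (k : ℕ) * (1 - X) ^ b : K[X]).degree < l := by
    refine (degree_le_of_natDegree_le (n := k + b) ?_).trans_lt
      (by exact_mod_cast (show (k : ℕ) + b < l by omega))
    compute_degree
  have hcol := congrFun (kacMatrix_mulVec_coeff _ hdeg) i
  rw [show l - 1 = k + b by omega, kacOperator_one_add_X_pow_mul_one_sub_X_pow] at hcol
  have hlK : (l : K) = k + b + 1 := by
    rw [← Nat.cast_add, ← Nat.cast_add_one, hb]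
  rw [mul_diagonal, mul_apply]
  simp only [kacEigenvectors, of_apply, show l - 1 - k = b by omega]
  refine hcol.trans ?_
  rw [coeff_C_mul, hlK]
  ring

end KacMatrix

section Diagonalization

open Matrix

variable {n : Type*} [Fintype n] [DecidableEq n]

lemma Matrix.isUnit_of_mul_eq_mul_diagonal {K : Type*} [Field K] {B P : Matrix n n K}
    {d : n → K} (hd : Function.Injective d) (hP : ∀ k, Pᵀ k ≠ 0)
    (h : B * P = P * diagonal d) : IsUnit P := by
  rw [← linearIndependent_cols_iff_isUnit]
  refine Module.End.eigenvectors_linearIndependent' (mulVecLin B) d hd _ fun k => ⟨?_, hP k⟩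
  rw [Module.End.mem_eigenspace_iff, mulVecLin_apply]
  ext i
  have hik := congrFun (congrFun h i) k
  rw [mul_diagonal, mul_apply] at hik
  simpa [mulVec, dotProduct, mul_comm] using hik

lemma Matrix.det_smul_one_add_smul_map_of_mul_eq_mul_diagonal {K R : Type*} [CommRing K]
    [CommRing R] (f : K →+* R) {B P : Matrix n n K} {d : n → K} (hP : IsUnit P.det)
    (h : B * P = P * diagonal d) (x y : R) :
    (x • 1 + y • B.map f).det = ∏ k, (x + y * f (d k)) := by
  have hPf : IsUnit (P.map f).det := by simpa [RingHom.map_det] using hP.map f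
  have hconj : (x • 1 + y • B.map f) * P.map f
      = P.map f * diagonal fun k => x + y * f (d k) := by
    have := congrArg (map · f) h
    simp only [Matrix.map_mul, diagonal_map (map_zero f)] at this
    rw [add_mul, smul_mul, smul_mul, one_mul, this]
    ext i k
    simp [mul_diagonal, mul_add, mul_left_comm, mul_comm]
  rw [← det_diagonal]
  apply hPf.mul_left_cancel
  rw [mul_comm, ← det_mul, hconj, det_mul]

end Diagonalization

open MvPolynomial Matrix

lemma det_smul_one_add_smul_map_kacMatrix {K R : Type*} [Field K] [CharZero K]
    [CommRing R] (f : K →+* R) (l : ℕ) (x y : R) :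
    (x • 1 + y • (kacMatrix K l).map f).det = ∏ k : Fin l, (x + y * f (2 * k - (l - 1))) := by
  refine det_smul_one_add_smul_map_of_mul_eq_mul_diagonal f ?_
    (kacMatrix_mul_kacEigenvectors l) x y
  refine (isUnit_iff_isUnit_det _).1 (isUnit_of_mul_eq_mul_diagonal ?_ ?_
    (kacMatrix_mul_kacEigenvectors l))
  · intro a b h
    exact Fin.ext (by simpa using h)
  · intro k hk
    simpa [kacEigenvectors, Polynomial.coeff_zero_eq_eval_zero] using congrFun hk ⟨0, k.pos⟩

section TotalDegree

variable {σ R : Type*} [CommRing R]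

lemma totalDegree_prod_add_C_sub_prod_lt {ι : Type*} {s : Finset ι} (hs : s.Nonempty)
    (a : ι → MvPolynomial σ R) (c : ι → R) (ha : ∀ i ∈ s, (a i).totalDegree ≤ 1) :
    (∏ i ∈ s, (a i + C (c i)) - ∏ i ∈ s, a i).totalDegree < s.card := by
  classical
  rw [Finset.prod_add, ← Finset.sum_erase_add _ _ (Finset.mem_powerset_self s), Finset.sdiff_self,
    Finset.prod_empty, mul_one, add_sub_cancel_right]
  refine (totalDegree_finsetSum _ _).trans_lt
    ((Finset.sup_lt_iff (by simpa using hs.card_pos)).2 fun t ht => ?_)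
  obtain ⟨hts, hts'⟩ : t ≠ s ∧ t ⊆ s := by simpa using ht
  calc _ ≤ (∏ i ∈ t, a i).totalDegree
          + (C (∏ i ∈ s \ t, c i) : MvPolynomial σ R).totalDegree := by
          rw [map_prod]; exact totalDegree_mul _ _
    _ ≤ t.card + 0 := by
          refine add_le_add ((totalDegree_finsetProd _ _).trans ?_) (totalDegree_C _).le
          simpa using Finset.sum_le_sum fun i hi => ha i (hts' hi)
    _ < s.card := by simpa using Finset.card_lt_card (hts'.ssubset_of_ne hts)

lemma totalDegree_det_add_map_C_sub_det_lt {n : Type*} [Fintype n] [DecidableEq n] [Nonempty n]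
    (A : Matrix n n (MvPolynomial σ R)) (N : Matrix n n R)
    (hA : ∀ i j, (A i j).totalDegree ≤ 1) :
    ((A + N.map C).det - A.det).totalDegree < Fintype.card n := by
  rw [det_apply', det_apply', ← Finset.sum_sub_distrib]
  refine (totalDegree_finsetSum _ _).trans_lt
    ((Finset.sup_lt_iff (by simp [Fintype.card_pos])).2 fun τ _ => ?_)
  rw [← mul_sub, ← map_intCast (C : R →+* MvPolynomial σ R)]
  refine (totalDegree_mul _ _).trans_lt ?_
  rw [totalDegree_C, zero_add]
  simpa using totalDegree_prod_add_C_sub_prod_lt Finset.univ_nonempty (fun i => A (τ i) i)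
    (fun i => N (τ i) i) fun i _ => hA _ _

end TotalDegree

section LinearFactors

variable {σ R ι : Type*} [CommRing R] (s : Finset ι) (c : ι → R) (i j : σ)

lemma isHomogeneous_prod_X_sub_C_mul_X :
    (∏ k ∈ s, (X i - C (c k) * X j : MvPolynomial σ R)).IsHomogeneous s.card := by
  simpa using IsHomogeneous.prod s _ (fun _ => 1) fun k _ =>
    (isHomogeneous_X R i).sub (by simpa using (isHomogeneous_C σ (c k)).mul (isHomogeneous_X R j))

lemma coeff_single_prod_X_sub_C_mul_X (hij : i ≠ j) :
    coeff (Finsupp.single i s.card)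
      (∏ k ∈ s, (X i - C (c k) * X j : MvPolynomial σ R)) = 1 := by
  classical
  obtain ⟨q, hq⟩ :
      X j ∣ ∏ k ∈ s, (X i - C (c k) * X j : MvPolynomial σ R) - X i ^ s.card := by
    have hXj : Ideal.Quotient.mk (Ideal.span {X j}) (X j : MvPolynomial σ R) = 0 :=
      Ideal.Quotient.eq_zero_iff_mem.2 (Ideal.mem_span_singleton_self _)
    rw [← Ideal.mem_span_singleton, ← Ideal.Quotient.eq]
    simp [map_prod, hXj]
  rw [eq_add_of_sub_eq hq, coeff_add, coeff_X_mul', coeff_X_pow]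
  simp [hij.symm]

end LinearFactors

lemma exists_det_eq_prod_add_totalDegree_lt (l : ℕ) (hl : 1 ≤ l) :
    ∃ R : MvPolynomial (Fin 2) ℂ,
      (Matrix.of fun i j : Fin l =>
        (if (i : ℕ) = (j : ℕ) then X 0 - C (((i : ℕ) * (l - (i : ℕ)) : ℕ) : ℂ)
        else if (i : ℕ) + 1 = (j : ℕ) then X 1 * C ((((i : ℕ) + 1 : ℕ)) : ℂ)
        else if (j : ℕ) + 1 = (i : ℕ) then X 1 * C (((l - (i : ℕ) : ℕ)) : ℂ)
        else 0 : MvPolynomial (Fin 2) ℂ)).det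
        = ∏ k ∈ Finset.range l, (X 0 - C ((l : ℂ) - 1 - 2 * (k : ℕ)) * X 1) + R ∧
      R.totalDegree < l := by
  have : Nonempty (Fin l) := ⟨⟨0, hl⟩⟩
  set A : Matrix (Fin l) (Fin l) (MvPolynomial (Fin 2) ℂ) :=
    (X 0 : MvPolynomial (Fin 2) ℂ) • 1
      + (X 1 : MvPolynomial (Fin 2) ℂ) • (kacMatrix ℂ l).map C
  obtain ⟨N, hsplit⟩ : ∃ N : Matrix (Fin l) (Fin l) ℂ, (Matrix.of fun i j : Fin l =>
        (if (i : ℕ) = (j : ℕ) then X 0 - C (((i : ℕ) * (l - (i : ℕ)) : ℕ) : ℂ)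
        else if (i : ℕ) + 1 = (j : ℕ) then X 1 * C ((((i : ℕ) + 1 : ℕ)) : ℂ)
        else if (j : ℕ) + 1 = (i : ℕ) then X 1 * C (((l - (i : ℕ) : ℕ)) : ℂ)
        else 0 : MvPolynomial (Fin 2) ℂ))
      = A + N.map C := by
    refine ⟨diagonal fun i => -(((i : ℕ) * (l - (i : ℕ)) : ℕ) : ℂ),
      Matrix.ext fun i j => ?_⟩
    simp only [A, Matrix.add_apply, Matrix.smul_apply, one_apply, map_apply, diagonal_apply,
      kacMatrix, of_apply, Fin.ext_iff, smul_eq_mul]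
    split_ifs <;> first | omega | (push_cast; simp only [map_neg, map_zero]; ring)
  have hAdeg : ∀ i j, (A i j).totalDegree ≤ 1 := by
    intro i j
    simp only [A, Matrix.add_apply, Matrix.smul_apply, map_apply, smul_eq_mul, one_apply]
    refine (totalDegree_add _ _).trans (max_le ?_ ?_) <;> refine (totalDegree_mul _ _).trans ?_
    · split_ifs <;> simp
    · simp
  have hA : A.det = ∏ k ∈ Finset.range l, (X 0 - C ((l : ℂ) - 1 - 2 * (k : ℕ)) * X 1) := by
    rw [det_smul_one_add_smul_map_kacMatrix, ← Fin.prod_univ_eq_prod_range]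
    refine Finset.prod_congr rfl fun k _ => ?_
    rw [show 2 * (k : ℂ) - (l - 1) = -((l : ℂ) - 1 - 2 * (k : ℕ)) by ring, map_neg]
    ring
  refine ⟨_, (add_sub_cancel _ _).symm, ?_⟩
  have hlow := totalDegree_det_add_map_C_sub_det_lt A N hAdeg
  rwa [Fintype.card_fin, ← hsplit, hA] at hlow

/-- the projective closure of Γ_l meets the infinity line
transversely in exactly l distinct points with asymptotic directions
λ/μ = l-1, l-3, …, -(l-1): the defining polynomial D = det(H_l + λId)
(X 0 = λ, X 1 = μ) has total degree l, its top homogeneous part is the product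
of the l pairwise distinct linear forms λ - (l-1-2k)μ, and the coefficient of
λ^l is nonzero (so the point at infinity of the λ-axis is not on the closure). -/
theorem stmt15 (l : ℕ) (hl : 1 ≤ l) :
    (((Matrix.of fun i j : Fin l =>
        (if (i : ℕ) = (j : ℕ) then X 0 - C (((i : ℕ) * (l - (i : ℕ)) : ℕ) : ℂ)
        else if (i : ℕ) + 1 = (j : ℕ) then X 1 * C ((((i : ℕ) + 1 : ℕ)) : ℂ)
        else if (j : ℕ) + 1 = (i : ℕ) then X 1 * C (((l - (i : ℕ) : ℕ)) : ℂ)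
        else 0 : MvPolynomial (Fin 2) ℂ)).det).totalDegree = l) ∧
    (MvPolynomial.homogeneousComponent l
      ((Matrix.of fun i j : Fin l =>
        (if (i : ℕ) = (j : ℕ) then X 0 - C (((i : ℕ) * (l - (i : ℕ)) : ℕ) : ℂ)
        else if (i : ℕ) + 1 = (j : ℕ) then X 1 * C ((((i : ℕ) + 1 : ℕ)) : ℂ)
        else if (j : ℕ) + 1 = (i : ℕ) then X 1 * C (((l - (i : ℕ) : ℕ)) : ℂ)
        else 0 : MvPolynomial (Fin 2) ℂ)).det)
      = ∏ k ∈ Finset.range l, (X 0 - C ((l : ℂ) - 1 - 2 * (k : ℕ)) * X 1)) ∧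
    (Function.Injective fun k : Fin l => (l : ℂ) - 1 - 2 * ((k : ℕ) : ℂ)) ∧
    MvPolynomial.coeff (Finsupp.single (0 : Fin 2) l)
      ((Matrix.of fun i j : Fin l =>
        (if (i : ℕ) = (j : ℕ) then X 0 - C (((i : ℕ) * (l - (i : ℕ)) : ℕ) : ℂ)
        else if (i : ℕ) + 1 = (j : ℕ) then X 1 * C ((((i : ℕ) + 1 : ℕ)) : ℂ)
        else if (j : ℕ) + 1 = (i : ℕ) then X 1 * C (((l - (i : ℕ) : ℕ)) : ℂ)
        else 0 : MvPolynomial (Fin 2) ℂ)).det) ≠ 0 := by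
  obtain ⟨R, hdet, hR⟩ := exists_det_eq_prod_add_totalDegree_lt l hl
  set T : MvPolynomial (Fin 2) ℂ :=
    ∏ k ∈ Finset.range l, (X 0 - C ((l : ℂ) - 1 - 2 * (k : ℕ)) * X 1)
  have hT : T.IsHomogeneous l := by
    simpa using isHomogeneous_prod_X_sub_C_mul_X (Finset.range l) _ (0 : Fin 2) 1
  have hTcoeff : coeff (Finsupp.single 0 l) T = 1 := by
    simpa using coeff_single_prod_X_sub_C_mul_X (Finset.range l) _ (0 : Fin 2) 1 zero_ne_one
  have hRcoeff : coeff (Finsupp.single 0 l) R = 0 :=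
    coeff_eq_zero_of_totalDegree_lt <| by
      rwa [Finsupp.support_single _ (by omega), Finset.sum_singleton, Finsupp.single_eq_same]
  rw [hdet]
  refine ⟨?_, ?_, ?_, ?_⟩
  · have hT0 : T ≠ 0 := fun h => by simp [h] at hTcoeff
    rw [totalDegree_add_eq_left_of_totalDegree_lt (by rwa [hT.totalDegree hT0]), hT.totalDegree hT0]
  · rw [map_add, homogeneousComponent_eq_zero _ _ hR, add_zero, homogeneousComponent_eq_self hT]
  · intro a b h
    exact Fin.ext (by simpa using h)
  · rw [coeff_add, hTcoeff, hRcoeff, add_zero]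
    exact one_ne_zero
end
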